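/- arXiv:2302.13337 — 8 statements merged into one kernel-verified Lean document; each statement's English description precedes it below -/
import Mathlib

section
/- Let N ≥ 1 and let χ, u, w : ℝᴺ × ℝ × ℝ → ℝᴺ be twice continuously differentiable maps such that ∂χ/∂t(x,t,ε) = u(χ(x,t,ε), t, ε) and ∂χ/∂ε(x,t,ε) = w(χ(x,t,ε), t, ε) for all (x,t,ε). Then for all (x,t,ε), writing y = χ(x,t,ε), one has ∂u/∂ε(y,t,ε) = ∂w/∂t(y,t,ε) + (u·∇)w(y,t,ε) − (w·∇)u(y,t,ε). In particular, if x ↦ χ(x,t,ε) is surjective onto ℝᴺ for each (t,ε), then the variation of the Eulerian velocity satisfies δu = ∂w/∂t + [u, w] everywhere, where [u,w] := (u·∇)w − (w·∇)u. -/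
/-- Chain rule for `p ↦ F (g p) p.1 p.2`. -/
theorem aux_chain (N : ℕ) (F : (Fin N → ℝ) → ℝ → ℝ → (Fin N → ℝ))
    (hF : ContDiff ℝ 2 (fun q : (Fin N → ℝ) × ℝ × ℝ => F q.1 q.2.1 q.2.2))
    (g : ℝ × ℝ → (Fin N → ℝ)) (hg : Differentiable ℝ g) (p0 v : ℝ × ℝ) :
    fderiv ℝ (fun p => F (g p) p.1 p.2) p0 v =
      fderiv ℝ (fun z => F z p0.1 p0.2) (g p0) (fderiv ℝ g p0 v)
      + v.1 • deriv (fun s => F (g p0) s p0.2) p0.1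
      + v.2 • deriv (fun e => F (g p0) p0.1 e) p0.2 := by
  set U := fun q : (Fin N → ℝ) × ℝ × ℝ => F q.1 q.2.1 q.2.2 with hU
  have hUd : Differentiable ℝ U := hF.differentiable (by norm_num)
  set q0 : (Fin N → ℝ) × ℝ × ℝ := (g p0, p0.1, p0.2) with hq0
  -- the composed map
  have hG : HasFDerivAt (fun p : ℝ × ℝ => ((g p, p) : (Fin N → ℝ) × ℝ × ℝ))
      ((fderiv ℝ g p0).prod (ContinuousLinearMap.id ℝ (ℝ × ℝ))) p0 :=
    (hg p0).hasFDerivAt.prodMk (hasFDerivAt_id p0)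
  have hcomp : HasFDerivAt (fun p : ℝ × ℝ => F (g p) p.1 p.2)
      ((fderiv ℝ U q0).comp ((fderiv ℝ g p0).prod (ContinuousLinearMap.id ℝ (ℝ × ℝ)))) p0 := by
    have : HasFDerivAt (fun p : ℝ × ℝ => U (g p, p))
        ((fderiv ℝ U q0).comp ((fderiv ℝ g p0).prod (ContinuousLinearMap.id ℝ (ℝ × ℝ)))) p0 :=
      ((hUd _).hasFDerivAt.comp p0 hG)
    exact this
  have h1 : fderiv ℝ (fun p => F (g p) p.1 p.2) p0 v
      = fderiv ℝ U q0 (fderiv ℝ g p0 v, v) := by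
    rw [hcomp.fderiv]; rfl
  -- decompose the vector
  have hvec : ((fderiv ℝ g p0 v, v) : (Fin N → ℝ) × ℝ × ℝ)
      = (fderiv ℝ g p0 v, (0:ℝ), (0:ℝ)) + v.1 • ((0:Fin N → ℝ), (1:ℝ), (0:ℝ))
        + v.2 • ((0:Fin N → ℝ), (0:ℝ), (1:ℝ)) := by
    simp [Prod.ext_iff]
  have hA : fderiv ℝ U q0 (fderiv ℝ g p0 v, (0:ℝ), (0:ℝ))
      = fderiv ℝ (fun z => F z p0.1 p0.2) (g p0) (fderiv ℝ g p0 v) := by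
    have hincl : HasFDerivAt (fun z : Fin N → ℝ => ((z, p0.1, p0.2) : (Fin N → ℝ) × ℝ × ℝ))
        ((ContinuousLinearMap.id ℝ (Fin N → ℝ)).prod 0) (g p0) :=
      (hasFDerivAt_id _).prodMk (hasFDerivAt_const _ _)
    have := ((hUd q0).hasFDerivAt.comp (g p0) hincl).fderiv
    have h2 : fderiv ℝ (fun z => F z p0.1 p0.2) (g p0)
        = (fderiv ℝ U q0).comp ((ContinuousLinearMap.id ℝ (Fin N → ℝ)).prod 0) := this
    rw [h2]; rfl
  have hB : fderiv ℝ U q0 ((0:Fin N → ℝ), (1:ℝ), (0:ℝ))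
      = deriv (fun s => F (g p0) s p0.2) p0.1 := by
    have hc : HasDerivAt (fun s : ℝ => ((g p0, s, p0.2) : (Fin N → ℝ) × ℝ × ℝ))
        ((0:Fin N → ℝ), (1:ℝ), (0:ℝ)) p0.1 :=
      (hasDerivAt_const _ _).prodMk ((hasDerivAt_id _).prodMk (hasDerivAt_const _ _))
    have := ((hUd q0).hasFDerivAt.comp_hasDerivAt p0.1 hc).deriv
    exact this.symm
  have hC : fderiv ℝ U q0 ((0:Fin N → ℝ), (0:ℝ), (1:ℝ))
      = deriv (fun e => F (g p0) p0.1 e) p0.2 := by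
    have hc : HasDerivAt (fun e : ℝ => ((g p0, p0.1, e) : (Fin N → ℝ) × ℝ × ℝ))
        ((0:Fin N → ℝ), (0:ℝ), (1:ℝ)) p0.2 :=
      (hasDerivAt_const _ _).prodMk ((hasDerivAt_const _ _).prodMk (hasDerivAt_id _))
    have := ((hUd q0).hasFDerivAt.comp_hasDerivAt p0.2 hc).deriv
    exact this.symm
  rw [h1, hvec, map_add, map_add, map_smul, map_smul, hA, hB, hC]

/-- **Variations of the Eulerian velocity (Lin constraint).**
If `∂χ/∂t = u ∘ χ` and `∂χ/∂ε = w ∘ χ` for jointly `C²` maps, then at every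
point `y = χ(x,t,ε)` one has `δu = ∂w/∂t + (u·∇)w − (w·∇)u`; in particular, if
`x ↦ χ(x,t,ε)` is surjective, this holds everywhere. -/
theorem eulerian_variation_formula
    (N : ℕ) (hN : 1 ≤ N)
    (χ u w : (Fin N → ℝ) → ℝ → ℝ → (Fin N → ℝ))
    (hχ : ContDiff ℝ 2 (fun p : (Fin N → ℝ) × ℝ × ℝ => χ p.1 p.2.1 p.2.2))
    (hu : ContDiff ℝ 2 (fun p : (Fin N → ℝ) × ℝ × ℝ => u p.1 p.2.1 p.2.2))
    (hw : ContDiff ℝ 2 (fun p : (Fin N → ℝ) × ℝ × ℝ => w p.1 p.2.1 p.2.2))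
    (ht : ∀ (x : Fin N → ℝ) (t ε : ℝ),
      HasDerivAt (fun s => χ x s ε) (u (χ x t ε) t ε) t)
    (hε : ∀ (x : Fin N → ℝ) (t ε : ℝ),
      HasDerivAt (fun e => χ x t e) (w (χ x t ε) t ε) ε) :
    (∀ (x : Fin N → ℝ) (t ε : ℝ),
      deriv (fun e => u (χ x t ε) t e) ε =
        deriv (fun s => w (χ x t ε) s ε) t
        + fderiv ℝ (fun z => w z t ε) (χ x t ε) (u (χ x t ε) t ε)
        - fderiv ℝ (fun z => u z t ε) (χ x t ε) (w (χ x t ε) t ε)) ∧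
    ((∀ t ε : ℝ, Function.Surjective (fun x => χ x t ε)) →
      ∀ (y : Fin N → ℝ) (t ε : ℝ),
        deriv (fun e => u y t e) ε =
          deriv (fun s => w y s ε) t
          + fderiv ℝ (fun z => w z t ε) y (u y t ε)
          - fderiv ℝ (fun z => u z t ε) y (w y t ε)) := by
  have key : ∀ (x : Fin N → ℝ) (t ε : ℝ),
      deriv (fun e => u (χ x t ε) t e) ε =
        deriv (fun s => w (χ x t ε) s ε) t
        + fderiv ℝ (fun z => w z t ε) (χ x t ε) (u (χ x t ε) t ε)
        - fderiv ℝ (fun z => u z t ε) (χ x t ε) (w (χ x t ε) t ε) := by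
    intro x t ε
    set g : ℝ × ℝ → (Fin N → ℝ) := fun p => χ x p.1 p.2 with hgdef
    have hg2 : ContDiff ℝ 2 g := by
      have : ContDiff ℝ 2 (fun p : ℝ × ℝ => ((x, p) : (Fin N → ℝ) × ℝ × ℝ)) :=
        contDiff_const.prodMk contDiff_id
      exact hχ.comp this
    have hgd : Differentiable ℝ g := hg2.differentiable (by norm_num)
    set p0 : ℝ × ℝ := (t, ε) with hp0
    set y : Fin N → ℝ := χ x t ε with hy
    -- partial derivatives of g
    have hpt : ∀ p : ℝ × ℝ, fderiv ℝ g p ((1:ℝ), (0:ℝ)) = u (g p) p.1 p.2 := by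
      intro p
      have hc : HasDerivAt (fun s : ℝ => ((s, p.2) : ℝ × ℝ)) ((1:ℝ), (0:ℝ)) p.1 :=
        (hasDerivAt_id _).prodMk (hasDerivAt_const _ _)
      have h1 : HasDerivAt (fun s : ℝ => g (s, p.2)) (fderiv ℝ g p ((1:ℝ), (0:ℝ))) p.1 := by
        have := (hgd p).hasFDerivAt.comp_hasDerivAt p.1 hc
        exact this
      exact h1.unique (ht x p.1 p.2)
    have hpe : ∀ p : ℝ × ℝ, fderiv ℝ g p ((0:ℝ), (1:ℝ)) = w (g p) p.1 p.2 := by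
      intro p
      have hc : HasDerivAt (fun e : ℝ => ((p.1, e) : ℝ × ℝ)) ((0:ℝ), (1:ℝ)) p.2 :=
        (hasDerivAt_const _ _).prodMk (hasDerivAt_id _)
      have h1 : HasDerivAt (fun e : ℝ => g (p.1, e)) (fderiv ℝ g p ((0:ℝ), (1:ℝ))) p.2 := by
        have := (hgd p).hasFDerivAt.comp_hasDerivAt p.2 hc
        exact this
      exact h1.unique (hε x p.1 p.2)
    -- second derivative symmetry
    have hfd1 : ContDiff ℝ 1 (fderiv ℝ g) := hg2.fderiv_right (by norm_num)
    have hfd : HasFDerivAt (fderiv ℝ g) (fderiv ℝ (fderiv ℝ g) p0) p0 :=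
      ((hfd1.differentiable (by norm_num)) p0).hasFDerivAt
    have hsymm := second_derivative_symmetric (fun z => (hgd z).hasFDerivAt) hfd
      ((1:ℝ), (0:ℝ)) ((0:ℝ), (1:ℝ))
    -- rewrite directional second derivatives
    have hswap : ∀ v v' : ℝ × ℝ,
        fderiv ℝ (fun p => fderiv ℝ g p v) p0 v' = fderiv ℝ (fderiv ℝ g) p0 v' v := by
      intro v v'
      have hL := (ContinuousLinearMap.apply ℝ (Fin N → ℝ) v).hasFDerivAt.comp p0 hfd
      have := hL.fderiv
      calc fderiv ℝ (fun p => fderiv ℝ g p v) p0 v'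
          = ((ContinuousLinearMap.apply ℝ (Fin N → ℝ) v).comp
              (fderiv ℝ (fderiv ℝ g) p0)) v' := by rw [← this]; rfl
        _ = fderiv ℝ (fderiv ℝ g) p0 v' v := rfl
    have e1 : fderiv ℝ (fun p => fderiv ℝ g p ((1:ℝ),(0:ℝ))) p0 ((0:ℝ),(1:ℝ))
        = fderiv ℝ (fun p => fderiv ℝ g p ((0:ℝ),(1:ℝ))) p0 ((1:ℝ),(0:ℝ)) := by
      rw [hswap, hswap]; exact hsymm.symm
    -- replace the directional derivatives by u, w compositions
    have hu' : (fun p : ℝ × ℝ => fderiv ℝ g p ((1:ℝ),(0:ℝ)))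
        = fun p => u (g p) p.1 p.2 := funext hpt
    have hw' : (fun p : ℝ × ℝ => fderiv ℝ g p ((0:ℝ),(1:ℝ)))
        = fun p => w (g p) p.1 p.2 := funext hpe
    rw [hu', hw'] at e1
    rw [aux_chain N u hu g hgd p0 ((0:ℝ),(1:ℝ)),
        aux_chain N w hw g hgd p0 ((1:ℝ),(0:ℝ))] at e1
    simp only [hpt, hpe] at e1
    simp only [one_smul, zero_smul, add_zero, zero_add] at e1
    linear_combination e1
  refine ⟨key, fun hsurj y t ε => ?_⟩
  obtain ⟨x, hx⟩ := hsurj t ε y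
  have := key x t ε
  simp only at hx
  rw [hx] at this
  exact this
end

section
/- Let E be a finite-dimensional real inner product space, let H : E → ℝ be continuously differentiable with gradient ∇H, and for each c ∈ E let A_c : E × E → ℝ be a bilinear form satisfying A_c(a,b) = −A_c(b,a). Let Δt be a real number and suppose z⁰, z¹ ∈ E satisfy ⟨w, z¹ − z⁰⟩ + Δt · A_{(z⁰+z¹)/2}(w, ∫₀¹ ∇H(z⁰ + s(z¹ − z⁰)) ds) = 0 for every w ∈ E. Then H(z¹) = H(z⁰): the Poisson integrator conserves the Hamiltonian exactly. -/
open intervalIntegral in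
/-- **Exact energy conservation for the Poisson integrator.**
If `z⁰, z¹` satisfy the implicit step
`⟨w, z¹ − z⁰⟩ + Δt · A_{(z⁰+z¹)/2}(w, ∫₀¹ ∇H(z⁰ + s(z¹ − z⁰)) ds) = 0` for all
`w`, with `A_c` antisymmetric for every `c`, then `H(z¹) = H(z⁰)`. -/
theorem poisson_integrator_energy
    {E : Type*} [NormedAddCommGroup E] [InnerProductSpace ℝ E] [FiniteDimensional ℝ E]
    (H : E → ℝ) (hH : ContDiff ℝ 1 H)
    (A : E → LinearMap.BilinForm ℝ E)
    (hanti : ∀ (c : E) (a b : E), A c a b = - A c b a)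
    (Δt : ℝ) (z₀ z₁ : E)
    (hstep : ∀ w : E,
      (inner ℝ w (z₁ - z₀) : ℝ)
        + Δt * A (((1:ℝ)/2) • (z₀ + z₁)) w
            (∫ s in (0:ℝ)..1, gradient H (z₀ + s • (z₁ - z₀))) = 0) :
    H z₁ = H z₀ := by
  set v := z₁ - z₀ with hv
  set γ : ℝ → E := fun s => z₀ + s • v with hγdef
  have hγ : ∀ s : ℝ, HasDerivAt γ v s := fun s => by
    rw [hγdef]; simpa using ((hasDerivAt_id s).smul_const v).const_add z₀
  have hdiff := hH.differentiable one_ne_zero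
  have hgradcont : Continuous fun s : ℝ => gradient H (γ s) := by
    have h1 : Continuous (fderiv ℝ H) := (contDiff_one_iff_fderiv.mp hH).2
    have h2 : Continuous γ := by
      exact continuous_const.add (continuous_id.smul continuous_const)
    exact ((InnerProductSpace.toDual ℝ E).symm.continuous.comp h1).comp h2
  have hderiv : ∀ s ∈ Set.uIcc (0:ℝ) 1,
      HasDerivAt (fun s => H (γ s)) (inner ℝ (gradient H (γ s)) v : ℝ) s := by
    intro s _
    have h1 : HasFDerivAt H (InnerProductSpace.toDual ℝ E (gradient H (γ s))) (γ s) :=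
      (hdiff (γ s)).hasGradientAt.hasFDerivAt
    have := h1.comp_hasDerivAt s (hγ s)
    rw [InnerProductSpace.toDual_apply_apply] at this; exact this
  have hcont : Continuous fun s : ℝ => (inner ℝ (gradient H (γ s)) v : ℝ) :=
    hgradcont.inner continuous_const
  have hftc : (∫ s in (0:ℝ)..1, (inner ℝ (gradient H (γ s)) v : ℝ))
      = H (γ 1) - H (γ 0) :=
    intervalIntegral.integral_eq_sub_of_hasDerivAt hderiv
      (hcont.intervalIntegrable 0 1)
  set g : E := ∫ s in (0:ℝ)..1, gradient H (γ s) with hg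
  have hint : MeasureTheory.IntegrableOn (fun s : ℝ => gradient H (γ s))
      (Set.Ioc (0:ℝ) 1) := hgradcont.integrableOn_Ioc
  have hswap : (∫ s in (0:ℝ)..1, (inner ℝ (gradient H (γ s)) v : ℝ)) = inner ℝ g v := by
    have h1 : (∫ s in (0:ℝ)..1, (inner ℝ (gradient H (γ s)) v : ℝ))
        = (∫ s in (0:ℝ)..1, (inner ℝ v (gradient H (γ s)) : ℝ)) := by
      simp_rw [real_inner_comm]
    rw [h1, hg, intervalIntegral.integral_of_le (by norm_num : (0:ℝ) ≤ 1),
      intervalIntegral.integral_of_le (by norm_num : (0:ℝ) ≤ 1),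
      integral_inner hint v, real_inner_comm]
  have hA : A (((1:ℝ)/2) • (z₀ + z₁)) g g = 0 := by
    have := hanti (((1:ℝ)/2) • (z₀ + z₁)) g g
    linarith
  have hs := hstep g
  rw [hA, mul_zero, add_zero] at hs
  have h10 : H (γ 1) - H (γ 0) = 0 := by rw [← hftc, hswap, hs]
  have hγ0 : γ 0 = z₀ := by simp [hγdef]
  have hγ1 : γ 1 = z₁ := by simp [hγdef, hv]
  rw [hγ0, hγ1] at h10
  linarith
end

section
/- Let E be a finite-dimensional real inner product space, let H : E → ℝ be continuously differentiable with gradient ∇H, and for each c ∈ E let A_c : E × E → ℝ be a bilinear form satisfying A_c(a,b) = −A_c(b,a). Let S : E → E be a symmetric linear map, b ∈ E, c₀ ∈ ℝ, and define the quadratic functional C(z) := ½⟨z, Sz⟩ + ⟨b, z⟩ + c₀. Assume A_c(Sc + b, w) = 0 for every c, w ∈ E (C is a Casimir of the bracket). If Δt ∈ ℝ and z⁰, z¹ ∈ E satisfy ⟨w, z¹ − z⁰⟩ + Δt · A_{(z⁰+z¹)/2}(w, ∫₀¹ ∇H(z⁰ + s(z¹ − z⁰)) ds) = 0 for every w ∈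 E, then C(z¹) = C(z⁰): the Poisson integrator preserves Casimirs that are at most quadratic functions of the state. -/
/-- **Preservation of quadratic Casimirs by the Poisson integrator.**
With `C(z) = ½⟨z, Sz⟩ + ⟨b, z⟩ + c₀` for a symmetric linear map `S`, if `C` is
a Casimir of the antisymmetric bracket `A` (i.e. `A_c(Sc + b, w) = 0` for all
`c, w`) and `z⁰, z¹` satisfy the Poisson-integrator step, then
`C(z¹) = C(z⁰)`. -/
theorem poisson_integrator_quadratic_casimir
    {E : Type*} [NormedAddCommGroup E] [InnerProductSpace ℝ E] [FiniteDimensional ℝ E]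
    (H : E → ℝ) (hH : ContDiff ℝ 1 H)
    (A : E → LinearMap.BilinForm ℝ E)
    (hanti : ∀ (c : E) (a b : E), A c a b = - A c b a)
    (S : E →ₗ[ℝ] E) (hS : ∀ a b : E, (inner ℝ (S a) b : ℝ) = inner ℝ a (S b))
    (b : E) (c₀ : ℝ)
    (C : E → ℝ)
    (hCdef : ∀ z : E, C z = (1/2 : ℝ) * (inner ℝ z (S z) : ℝ) + (inner ℝ b z : ℝ) + c₀)
    (hCasimir : ∀ (c w : E), A c (S c + b) w = 0)
    (Δt : ℝ) (z₀ z₁ : E)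
    (hstep : ∀ w : E,
      (inner ℝ w (z₁ - z₀) : ℝ)
        + Δt * A (((1:ℝ)/2) • (z₀ + z₁)) w
            (∫ s in (0:ℝ)..1, gradient H (z₀ + s • (z₁ - z₀))) = 0) :
    C z₁ = C z₀ := by
  set c : E := ((1:ℝ)/2) • (z₀ + z₁) with hc
  have h := hstep (S c + b)
  rw [hCasimir c] at h
  have key : (inner ℝ (S c + b) (z₁ - z₀) : ℝ) = 0 := by linarith [h]
  have hexp : (inner ℝ (S c) (z₁ - z₀) : ℝ) + inner ℝ b (z₁ - z₀) = 0 := by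
    rw [← inner_add_left]; exact key
  have hSc : (inner ℝ (S c) (z₁ - z₀) : ℝ)
      = (1/2 : ℝ) * ((inner ℝ z₁ (S z₁) : ℝ) - inner ℝ z₀ (S z₀)) := by
    rw [hc, map_smul, inner_smul_left]
    simp only [map_add, inner_add_left, inner_sub_right, RCLike.ofReal_real_eq_id, id, starRingEnd_apply, star_trivial]
    rw [hS z₀ z₁]
    have h1 : (inner ℝ (S z₁) z₀ : ℝ) = inner ℝ z₀ (S z₁) := real_inner_comm _ _
    have h2 : (inner ℝ (S z₁) z₁ : ℝ) = inner ℝ z₁ (S z₁) := real_inner_comm _ _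
    have h3 : (inner ℝ (S z₀) z₀ : ℝ) = inner ℝ z₀ (S z₀) := real_inner_comm _ _
    ring_nf
    linarith [h1, h2, h3]
  rw [hCdef z₁, hCdef z₀]
  have hb : (inner ℝ b (z₁ - z₀) : ℝ) = inner ℝ b z₁ - inner ℝ b z₀ := inner_sub_right _ _ _
  linarith [hexp, hSc, hb]
end

section
/- For the compatible finite element incompressible Euler scheme, the energy ∫_{ℝ²} |u(t)|² dx is constant in t. -/
open MeasureTheory

/-- Partial derivative `∂f/∂xᵢ` of a scalar function on `ℝ²`. -/
noncomputable def pd2 (i : Fin 2) (f : (Fin 2 → ℝ) → ℝ) (x : Fin 2 → ℝ) : ℝ :=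
  fderiv ℝ f x (Pi.single i 1)

/-- Euclidean dot product on `ℝ²`. -/
def dot2 (a b : Fin 2 → ℝ) : ℝ := a 0 * b 0 + a 1 * b 1

/-- `a^⊥ = (−a₂, a₁)`. -/
def perp2 (a : Fin 2 → ℝ) : Fin 2 → ℝ := ![-(a 1), a 0]

/-- `∇^⊥γ = (−∂γ/∂x₂, ∂γ/∂x₁)`. -/
noncomputable def gradPerp2 (γ : (Fin 2 → ℝ) → ℝ) (x : Fin 2 → ℝ) : Fin 2 → ℝ :=
  ![-(pd2 1 γ x), pd2 0 γ x]

/-- Gradient `∇γ`. -/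
noncomputable def grad2 (γ : (Fin 2 → ℝ) → ℝ) (x : Fin 2 → ℝ) : Fin 2 → ℝ :=
  ![pd2 0 γ x, pd2 1 γ x]

/-- Divergence `∇·w` of a vector field on `ℝ²`. -/
noncomputable def div2 (w : (Fin 2 → ℝ) → Fin 2 → ℝ) (x : Fin 2 → ℝ) : ℝ :=
  pd2 0 (fun y => w y 0) x + pd2 1 (fun y => w y 1) x

lemma hasDerivAt_dual_eval
    (V₁ : Submodule ℝ ((Fin 2 → ℝ) → Fin 2 → ℝ)) [FiniteDimensional ℝ V₁]
    (u u' : ℝ → (Fin 2 → ℝ) → Fin 2 → ℝ)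
    (hu_mem : ∀ t, u t ∈ V₁) (hu'_mem : ∀ t, u' t ∈ V₁)
    (hu_deriv : ∀ t x, HasDerivAt (fun s => u s x) (u' t x) t)
    (ℓ : Module.Dual ℝ V₁) (t : ℝ) :
    HasDerivAt (fun s => ℓ ⟨u s, hu_mem s⟩) (ℓ ⟨u' t, hu'_mem t⟩) t := by
  classical
  set L : ((Fin 2 → ℝ) × Fin 2) → Module.Dual ℝ V₁ := fun p =>
    (LinearMap.proj p.2).comp ((LinearMap.proj p.1).comp V₁.subtype) with hL
  have hLapp : ∀ p (v : V₁), L p v = (v : (Fin 2 → ℝ) → Fin 2 → ℝ) p.1 p.2 := fun p v => rfl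
  have hspan : ℓ ∈ Submodule.span ℝ (Set.range L) := by
    apply FiniteDimensional.mem_span_of_iInf_ker_le_ker
    intro v hv
    have hv0 : v = 0 := by
      apply Subtype.ext
      funext x i
      have : v ∈ LinearMap.ker (L (x, i)) := (Submodule.mem_iInf _).mp hv (x, i)
      simpa [hLapp] using this
    simp [hv0]
  obtain ⟨c, hc⟩ := Finsupp.mem_span_range_iff_exists_finsupp.mp hspan
  have hval : ∀ v : V₁, ℓ v = ∑ p ∈ c.support, c p * (v : (Fin 2 → ℝ) → Fin 2 → ℝ) p.1 p.2 := by
    intro v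
    rw [← hc]
    simp [Finsupp.sum, hLapp]
  have h1 : HasDerivAt (fun s => ∑ p ∈ c.support, c p * u s p.1 p.2)
      (∑ p ∈ c.support, c p * u' t p.1 p.2) t := by
    refine HasDerivAt.fun_sum fun p _ => ?_
    exact ((hasDerivAt_pi.mp (hu_deriv t p.1)) p.2).const_mul (c p)
  have heq : (fun s => ℓ ⟨u s, hu_mem s⟩) = fun s => ∑ p ∈ c.support, c p * u s p.1 p.2 := by
    funext s; exact hval _
  rw [heq, hval]
  exact h1

/-- **Energy conservation for the compatible finite element incompressible
Euler scheme.**  For the scheme with divergence-free `u(t) ∈ V₁`, diagnostic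
vorticity `ω(t) ∈ V₀` defined by `⟨γ, ω⟩ = −⟨∇^⊥γ, u⟩`, and momentum equation
`⟨w, ∂u/∂t⟩ + ∫ ω (w·u^⊥) dx = 0` for all divergence-free `w ∈ V₁`, the energy
`∫ |u(t)|² dx` is constant in `t`. -/
theorem euler_scheme_energy_conservation
    (V₀ : Submodule ℝ ((Fin 2 → ℝ) → ℝ))
    (V₁ : Submodule ℝ ((Fin 2 → ℝ) → Fin 2 → ℝ))
    [FiniteDimensional ℝ V₀] [FiniteDimensional ℝ V₁]
    (hV₀ : ∀ γ ∈ V₀, ContDiff ℝ (⊤ : ℕ∞) γ ∧ HasCompactSupport γ)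
    (hV₁ : ∀ w ∈ V₁, ContDiff ℝ (⊤ : ℕ∞) w ∧ HasCompactSupport w)
    (hcurl : ∀ γ ∈ V₀, gradPerp2 γ ∈ V₁)
    (u u' : ℝ → (Fin 2 → ℝ) → Fin 2 → ℝ)
    (hu_mem : ∀ t, u t ∈ V₁) (hu'_mem : ∀ t, u' t ∈ V₁)
    (hu_deriv : ∀ t x, HasDerivAt (fun s => u s x) (u' t x) t)
    (hu'_cont : ∀ x, Continuous fun t => u' t x)
    (hu_div : ∀ t x, div2 (u t) x = 0)
    (ω ω' : ℝ → (Fin 2 → ℝ) → ℝ)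
    (hω_mem : ∀ t, ω t ∈ V₀) (hω'_mem : ∀ t, ω' t ∈ V₀)
    (hω_deriv : ∀ t x, HasDerivAt (fun s => ω s x) (ω' t x) t)
    (hω'_cont : ∀ x, Continuous fun t => ω' t x)
    (hω_def : ∀ t, ∀ γ ∈ V₀,
      ∫ x, γ x * ω t x = - ∫ x, dot2 (gradPerp2 γ x) (u t x))
    (hmom : ∀ t, ∀ w ∈ V₁, (∀ x, div2 w x = 0) →
      (∫ x, dot2 (w x) (u' t x))
        + (∫ x, ω t x * dot2 (w x) (perp2 (u t x))) = 0) :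
    ∀ s t : ℝ, ∫ x, dot2 (u t x) (u t x) = ∫ x, dot2 (u s x) (u s x) := by
  classical
  -- Step 1: ⟨u, u'⟩ = 0 from the momentum equation with w = u(t).
  have huu' : ∀ t, ∫ x, dot2 (u t x) (u' t x) = 0 := by
    intro t
    have h0 : ∀ x, dot2 (u t x) (perp2 (u t x)) = 0 := by
      intro x
      simp only [dot2, perp2, Matrix.cons_val_zero, Matrix.cons_val_one, Matrix.head_cons]
      ring
    have hm := hmom t (u t) (hu_mem t) (hu_div t)
    simpa [h0] using hm
  -- Step 2: basis setup.
  set n := Module.finrank ℝ V₁ with hn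
  let b : Module.Basis (Fin n) ℝ V₁ := Module.finBasis ℝ V₁
  -- Integrability of products.
  have hint : ∀ v w : V₁,
      Integrable (fun x => dot2 ((v : (Fin 2 → ℝ) → Fin 2 → ℝ) x)
        ((w : (Fin 2 → ℝ) → Fin 2 → ℝ) x)) := by
    intro v w
    have hvc := (hV₁ v v.2).1.continuous
    have hwc := (hV₁ w w.2).1.continuous
    have hc : Continuous fun x => dot2 ((v : (Fin 2 → ℝ) → Fin 2 → ℝ) x)
        ((w : (Fin 2 → ℝ) → Fin 2 → ℝ) x) := by
      simp only [dot2]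
      exact (((continuous_apply (0 : Fin 2)).comp hvc).mul
          ((continuous_apply (0 : Fin 2)).comp hwc)).add
        (((continuous_apply (1 : Fin 2)).comp hvc).mul
          ((continuous_apply (1 : Fin 2)).comp hwc))
    have hs : HasCompactSupport fun x => dot2 ((v : (Fin 2 → ℝ) → Fin 2 → ℝ) x)
        ((w : (Fin 2 → ℝ) → Fin 2 → ℝ) x) := by
      refine HasCompactSupport.mono (hV₁ v v.2).2 ?_
      intro x hx
      simp only [Function.mem_support, Ne, dot2] at hx ⊢
      intro hvx
      apply hx
      rw [hvx]
      simp
    exact hc.integrable_of_hasCompactSupport hs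
  -- Expansion of the pairing in coordinates.
  have key : ∀ v w : V₁,
      ∫ x, dot2 ((v : (Fin 2 → ℝ) → Fin 2 → ℝ) x) ((w : (Fin 2 → ℝ) → Fin 2 → ℝ) x)
        = ∑ j, ∑ k, b.repr v j * b.repr w k *
            ∫ x, dot2 ((b j : (Fin 2 → ℝ) → Fin 2 → ℝ) x)
              ((b k : (Fin 2 → ℝ) → Fin 2 → ℝ) x) := by
    intro v w
    have hexp : ∀ (z : V₁) (x : Fin 2 → ℝ) (i : Fin 2),
        (z : (Fin 2 → ℝ) → Fin 2 → ℝ) x i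
          = ∑ j, b.repr z j * (b j : (Fin 2 → ℝ) → Fin 2 → ℝ) x i := by
      intro z x i
      conv_lhs => rw [← b.sum_repr z]
      rw [AddSubmonoidClass.coe_finset_sum]
      simp [Finset.sum_apply]
    have hpt : ∀ x, dot2 ((v : (Fin 2 → ℝ) → Fin 2 → ℝ) x) ((w : (Fin 2 → ℝ) → Fin 2 → ℝ) x)
        = ∑ j, ∑ k, b.repr v j * b.repr w k
            * dot2 ((b j : (Fin 2 → ℝ) → Fin 2 → ℝ) x) ((b k : (Fin 2 → ℝ) → Fin 2 → ℝ) x) := by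
      intro x
      rw [dot2, hexp v x 0, hexp v x 1, hexp w x 0, hexp w x 1,
        Finset.sum_mul_sum, Finset.sum_mul_sum, ← Finset.sum_add_distrib]
      refine Finset.sum_congr rfl fun j _ => ?_
      rw [← Finset.sum_add_distrib]
      refine Finset.sum_congr rfl fun k _ => ?_
      simp only [dot2]
      ring
    calc ∫ x, dot2 ((v : (Fin 2 → ℝ) → Fin 2 → ℝ) x) ((w : (Fin 2 → ℝ) → Fin 2 → ℝ) x)
        = ∫ x, ∑ j, ∑ k, b.repr v j * b.repr w k
            * dot2 ((b j : (Fin 2 → ℝ) → Fin 2 → ℝ) x)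
              ((b k : (Fin 2 → ℝ) → Fin 2 → ℝ) x) := by
          exact congrArg _ (funext hpt)
      _ = ∑ j, ∑ k, b.repr v j * b.repr w k *
            ∫ x, dot2 ((b j : (Fin 2 → ℝ) → Fin 2 → ℝ) x)
              ((b k : (Fin 2 → ℝ) → Fin 2 → ℝ) x) := by
          rw [integral_finset_sum]
          · refine Finset.sum_congr rfl fun j _ => ?_
            rw [integral_finset_sum]
            · refine Finset.sum_congr rfl fun k _ => ?_
              exact integral_const_mul _ _
            · exact fun k _ => (hint (b j) (b k)).const_mul _
          · exact fun j _ => integrable_finset_sum _ fun k _ => (hint (b j) (b k)).const_mul _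
  -- Coordinates of u and u'.
  set c : ℝ → Fin n → ℝ := fun t j => b.repr ⟨u t, hu_mem t⟩ j with hcdef
  set c' : ℝ → Fin n → ℝ := fun t j => b.repr ⟨u' t, hu'_mem t⟩ j with hc'def
  set M : Fin n → Fin n → ℝ := fun j k =>
    ∫ x, dot2 ((b j : (Fin 2 → ℝ) → Fin 2 → ℝ) x) ((b k : (Fin 2 → ℝ) → Fin 2 → ℝ) x) with hM
  have hc : ∀ t j, HasDerivAt (fun s => c s j) (c' t j) t := by
    intro t j
    have := hasDerivAt_dual_eval V₁ u u' hu_mem hu'_mem hu_deriv (b.coord j) t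
    simpa [Module.Basis.coord_apply, hcdef, hc'def] using this
  -- the energy as a polynomial in coordinates
  set g : ℝ → ℝ := fun t => ∑ j, ∑ k, c t j * c t k * M j k with hg
  have hgeq : ∀ t, ∫ x, dot2 (u t x) (u t x) = g t := by
    intro t
    exact key ⟨u t, hu_mem t⟩ ⟨u t, hu_mem t⟩
  have hgd : ∀ t, HasDerivAt g 0 t := by
    intro t
    have h1 : HasDerivAt g (∑ j, ∑ k, (c' t j * c t k + c t j * c' t k) * M j k) t := by
      refine HasDerivAt.fun_sum fun j _ => HasDerivAt.fun_sum fun k _ => ?_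
      exact ((hc t j).mul (hc t k)).mul_const _
    have e1 : ∑ j, ∑ k, (c' t j * c t k) * M j k = ∫ x, dot2 (u' t x) (u t x) :=
      (key ⟨u' t, hu'_mem t⟩ ⟨u t, hu_mem t⟩).symm
    have e2 : ∑ j, ∑ k, (c t j * c' t k) * M j k = ∫ x, dot2 (u t x) (u' t x) :=
      (key ⟨u t, hu_mem t⟩ ⟨u' t, hu'_mem t⟩).symm
    have e3 : ∫ x, dot2 (u' t x) (u t x) = ∫ x, dot2 (u t x) (u' t x) := by
      have : (fun x => dot2 (u' t x) (u t x)) = fun x => dot2 (u t x) (u' t x) := by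
        funext x; simp only [dot2]; ring
      rw [this]
    have hz : (∑ j, ∑ k, (c' t j * c t k + c t j * c' t k) * M j k) = 0 := by
      have : (∑ j, ∑ k, (c' t j * c t k + c t j * c' t k) * M j k)
          = (∑ j, ∑ k, (c' t j * c t k) * M j k) + ∑ j, ∑ k, (c t j * c' t k) * M j k := by
        rw [← Finset.sum_add_distrib]
        refine Finset.sum_congr rfl fun j _ => ?_
        rw [← Finset.sum_add_distrib]
        refine Finset.sum_congr rfl fun k _ => ?_
        ring
      rw [this, e1, e2, e3, huu' t]
      ring
    rwa [hz] at h1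
  intro s t
  rw [hgeq t, hgeq s]
  exact is_const_of_deriv_eq_zero (fun y => (hgd y).differentiableAt)
    (fun y => (hgd y).deriv) t s
end

section
/- For the compatible finite element incompressible Euler scheme, the enstrophy ∫_{ℝ²} ω(t)² dx is constant in t. -/
open MeasureTheory

open Set Function

section FinsetEval

variable {X : Type*} {E : Type*} [NormedAddCommGroup E] [NormedSpace ℝ E]

lemma exists_finset_eval_injective (V : Submodule ℝ (X → E)) [FiniteDimensional ℝ V] :
    ∃ S : Finset X, ∀ v : V, (∀ x ∈ S, (v : X → E) x = 0) → v = 0 := by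
  classical
  let K : Finset X → Submodule ℝ V :=
    fun S => ⨅ x ∈ S, LinearMap.ker ((LinearMap.proj x).comp V.subtype)
  have hmem : ∀ (S : Finset X) (v : V), v ∈ K S ↔ ∀ x ∈ S, (v : X → E) x = 0 := by
    intro S v
    simp [K, Submodule.mem_iInf, LinearMap.mem_ker]
  suffices h : ∀ (k : ℕ) (S : Finset X), Module.finrank ℝ (K S) ≤ k →
      ∃ S' : Finset X, K S' = ⊥ by
    obtain ⟨S', hS'⟩ := h (Module.finrank ℝ (K (∅ : Finset X))) ∅ le_rfl
    refine ⟨S', fun v hv => ?_⟩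
    have hvK : v ∈ K S' := (hmem S' v).2 hv
    rw [hS'] at hvK
    simpa using hvK
  intro k
  induction k with
  | zero =>
    intro S hS
    refine ⟨S, ?_⟩
    have h0 : Module.finrank ℝ (K S) = 0 := Nat.le_zero.mp hS
    exact Submodule.finrank_eq_zero.mp h0
  | succ k ih =>
    intro S hS
    by_cases hbot : K S = ⊥
    · exact ⟨S, hbot⟩
    · obtain ⟨v, hvK, hv0⟩ := Submodule.exists_mem_ne_zero_of_ne_bot hbot
      have hvf : (v : X → E) ≠ 0 := by
        intro h
        exact hv0 (Subtype.ext h)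
      obtain ⟨x, hx⟩ := Function.ne_iff.mp hvf
      have hlt : K (insert x S) < K S := by
        rw [SetLike.lt_iff_le_and_exists]
        constructor
        · intro w hw
          rw [hmem] at hw ⊢
          intro y hy
          exact hw y (Finset.mem_insert_of_mem hy)
        · refine ⟨v, hvK, ?_⟩
          rw [hmem]
          push_neg
          exact ⟨x, Finset.mem_insert_self x S, hx⟩
      have hrk := Submodule.finrank_lt_finrank_of_lt hlt
      exact ih (insert x S) (by omega)

lemma hasDerivAt_linearMap_comp [FiniteDimensional ℝ E]
    (V : Submodule ℝ (X → E)) [FiniteDimensional ℝ V]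
    {f f' : ℝ → X → E} (hf : ∀ t, f t ∈ V) (hf' : ∀ t, f' t ∈ V)
    (hd : ∀ t x, HasDerivAt (fun s => f s x) (f' t x) t)
    (L : V →ₗ[ℝ] ℝ) (t : ℝ) :
    HasDerivAt (fun s => L ⟨f s, hf s⟩) (L ⟨f' t, hf' t⟩) t := by
  classical
  obtain ⟨S, hS⟩ := exists_finset_eval_injective V
  let res : V →ₗ[ℝ] (S → E) := LinearMap.pi fun i => (LinearMap.proj (i : X)).comp V.subtype
  have hker : LinearMap.ker res = ⊥ := by
    rw [LinearMap.ker_eq_bot']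
    intro v hv
    apply hS
    intro x hx
    have h := congrFun hv ⟨x, hx⟩
    simpa [res] using h
  obtain ⟨g, hg⟩ := res.exists_leftInverse_of_injective hker
  let Φ : (S → E) →L[ℝ] ℝ := LinearMap.toContinuousLinearMap (L.comp g)
  have key : ∀ (w : X → E) (hw : w ∈ V), Φ (fun i : S => w i) = L ⟨w, hw⟩ := by
    intro w hw
    have h2 : g (res ⟨w, hw⟩) = ⟨w, hw⟩ := by
      have h3 := LinearMap.congr_fun hg ⟨w, hw⟩
      simpa using h3
    have : Φ (fun i : S => w i) = L (g (res ⟨w, hw⟩)) := rfl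
    rw [this, h2]
  have hq : HasDerivAt (fun s => (fun i : S => f s (i : X))) (fun i : S => f' t (i : X)) t :=
    hasDerivAt_pi.2 fun i => hd t (i : X)
  have hcomp := Φ.hasFDerivAt.comp_hasDerivAt t hq
  have e1 : (fun s => Φ (fun i : S => f s (i : X))) = fun s => L ⟨f s, hf s⟩ :=
    funext fun s => key (f s) (hf s)
  have e2 : Φ (fun i : S => f' t (i : X)) = L ⟨f' t, hf' t⟩ := key (f' t) (hf' t)
  rw [← e1, ← e2]
  exact hcomp

end FinsetEval

section Calc

lemma pd2_contDiff {γ : (Fin 2 → ℝ) → ℝ} (h : ContDiff ℝ (⊤ : ℕ∞) γ) (i : Fin 2) :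
    ContDiff ℝ (⊤ : ℕ∞) (pd2 i γ) := by
  have h1 : ContDiff ℝ (⊤ : ℕ∞) (fderiv ℝ γ) := h.fderiv_right (by simp)
  exact h1.clm_apply contDiff_const

lemma pd2_continuous {γ : (Fin 2 → ℝ) → ℝ} (h : ContDiff ℝ (⊤ : ℕ∞) γ) (i : Fin 2) :
    Continuous (pd2 i γ) := (pd2_contDiff h i).continuous

lemma pd2_support {γ : (Fin 2 → ℝ) → ℝ} (i : Fin 2) :
    support (pd2 i γ) ⊆ tsupport γ := by
  intro x hx
  have h0 : fderiv ℝ γ x ≠ 0 := by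
    intro h
    apply hx
    simp [pd2, h]
  exact support_fderiv_subset ℝ h0

lemma pd2_hcs {γ : (Fin 2 → ℝ) → ℝ} (hγ : HasCompactSupport γ) (i : Fin 2) :
    HasCompactSupport (pd2 i γ) :=
  IsCompact.of_isClosed_subset hγ (isClosed_tsupport _)
    (closure_minimal (pd2_support i) (isClosed_tsupport γ))

lemma pd2_eq_zero_of_nmem_tsupport {γ : (Fin 2 → ℝ) → ℝ} {x : Fin 2 → ℝ} (i : Fin 2)
    (hx : x ∉ tsupport γ) : pd2 i γ x = 0 := by
  have := support_fderiv_subset ℝ (f := γ)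
  have h0 : fderiv ℝ γ x = 0 := by
    by_contra h
    exact hx (this h)
  simp [pd2, h0]

lemma pd2_mul {f g : (Fin 2 → ℝ) → ℝ} {x : Fin 2 → ℝ}
    (hf : DifferentiableAt ℝ f x) (hg : DifferentiableAt ℝ g x) (i : Fin 2) :
    pd2 i (fun y => f y * g y) x = pd2 i f x * g x + f x * pd2 i g x := by
  unfold pd2
  rw [fderiv_fun_mul hf hg]
  simp
  ring

lemma pd2_comp_apply {w : (Fin 2 → ℝ) → Fin 2 → ℝ} {x : Fin 2 → ℝ}
    (hw : DifferentiableAt ℝ w x) (i j : Fin 2) :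
    pd2 i (fun y => w y j) x = fderiv ℝ w x (Pi.single i 1) j := by
  have h : HasFDerivAt (fun y => w y j)
      ((ContinuousLinearMap.proj j).comp (fderiv ℝ w x)) x :=
    (ContinuousLinearMap.proj (R := ℝ) (φ := fun _ : Fin 2 => ℝ) j).hasFDerivAt.comp x
      hw.hasFDerivAt
  rw [pd2, h.fderiv]
  rfl

lemma pd2_comm {γ : (Fin 2 → ℝ) → ℝ} (hγ : ContDiff ℝ (⊤ : ℕ∞) γ) (i j : Fin 2)
    (x : Fin 2 → ℝ) : pd2 i (pd2 j γ) x = pd2 j (pd2 i γ) x := by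
  have hγd : ∀ y, HasFDerivAt γ (fderiv ℝ γ y) y := fun y =>
    (hγ.differentiable (by simp) y).hasFDerivAt
  have hfd : ContDiff ℝ (⊤ : ℕ∞) (fderiv ℝ γ) := hγ.fderiv_right (by simp)
  have hx : HasFDerivAt (fderiv ℝ γ) (fderiv ℝ (fderiv ℝ γ) x) x :=
    (hfd.differentiable (by simp) x).hasFDerivAt
  have hsymm := second_derivative_symmetric hγd hx (Pi.single i 1) (Pi.single j 1)
  have hred : ∀ (i j : Fin 2),
      pd2 i (pd2 j γ) x = fderiv ℝ (fderiv ℝ γ) x (Pi.single i 1) (Pi.single j 1) := by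
    intro i j
    unfold pd2
    rw [fderiv_clm_apply (hfd.differentiable (by simp) x) (differentiableAt_const _)]
    simp
  rw [hred i j, hred j i]
  exact hsymm

lemma div2_gradPerp2 {γ : (Fin 2 → ℝ) → ℝ} (hγ : ContDiff ℝ (⊤ : ℕ∞) γ) (x : Fin 2 → ℝ) :
    div2 (gradPerp2 γ) x = 0 := by
  have h0 : (fun y => gradPerp2 γ y 0) = fun y => -(pd2 1 γ y) := by
    funext y; simp [gradPerp2]
  have h1 : (fun y => gradPerp2 γ y 1) = fun y => pd2 0 γ y := by
    funext y; simp [gradPerp2]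
  have hneg : pd2 0 (fun y => -(pd2 1 γ y)) x = -(pd2 0 (pd2 1 γ) x) := by
    unfold pd2
    rw [fderiv_fun_neg]
    simp
  rw [div2, h0, h1, hneg, pd2_comm hγ 0 1 x]
  ring

lemma dot2_gradPerp2_perp2 (γ : (Fin 2 → ℝ) → ℝ) (x : Fin 2 → ℝ) (v : Fin 2 → ℝ) :
    dot2 (gradPerp2 γ x) (perp2 v) = dot2 (grad2 γ x) v := by
  simp [dot2, gradPerp2, grad2, perp2]
  ring

end Calc

lemma div2_eq_sum {w : (Fin 2 → ℝ) → Fin 2 → ℝ} {x : Fin 2 → ℝ}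
    (hw : DifferentiableAt ℝ w x) :
    div2 w x = ∑ i : Fin 2, fderiv ℝ w x (Pi.single i 1) i := by
  rw [div2, pd2_comp_apply hw, pd2_comp_apply hw, Fin.sum_univ_two]

lemma integral_div2_eq_zero {w : (Fin 2 → ℝ) → Fin 2 → ℝ}
    (hw : ContDiff ℝ (⊤ : ℕ∞) w) (hcs : HasCompactSupport w) :
    ∫ x, div2 w x = 0 := by
  have hwd : Differentiable ℝ w := hw.differentiable (by simp)
  obtain ⟨R, hR0, hRs⟩ := hcs.isBounded.subset_closedBall_lt 0 0
  set a : Fin 2 → ℝ := fun _ => -(R + 1) with ha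
  set b : Fin 2 → ℝ := fun _ => R + 1 with hb
  have hab : a ≤ b := by
    intro i
    have h1 : a i = -(R+1) := rfl
    have h2 : b i = R+1 := rfl
    rw [h1, h2]; linarith
  -- points with a coordinate of absolute value ≥ R+1 are outside tsupport
  have hout : ∀ (y : Fin 2 → ℝ) (i : Fin 2), R + 1 ≤ |y i| → w y = 0 := by
    intro y i hy
    have h1 : |y i| ≤ ‖y‖ := by
      simpa using norm_le_pi_norm y i
    have h2 : y ∉ Metric.closedBall (0 : Fin 2 → ℝ) R := by
      intro hmem
      rw [Metric.mem_closedBall, dist_zero_right] at hmem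
      linarith
    exact image_eq_zero_of_notMem_tsupport fun h => h2 (hRs h)
  -- continuity of the divergence integrand
  have hfd' : ContDiff ℝ (⊤ : ℕ∞) (fderiv ℝ w) := hw.fderiv_right (by simp)
  have hfdcont : Continuous (fun x => fderiv ℝ w x) := hfd'.continuous
  have hdivcont : Continuous (fun x => ∑ i : Fin 2, fderiv ℝ w x (Pi.single i 1) i) := by
    apply continuous_finset_sum
    intro i _
    exact (continuous_apply i).comp (hfdcont.clm_apply continuous_const)
  have Hi : IntegrableOn (fun x => ∑ i : Fin 2, fderiv ℝ w x (Pi.single i 1) i)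
      (Icc a b) volume := hdivcont.continuousOn.integrableOn_compact isCompact_Icc
  have hdt := MeasureTheory.integral_divergence_of_hasFDerivAt_off_countable
      (n := 1) a b hab w (fun x => fderiv ℝ w x) ∅ Set.countable_empty
      hw.continuous.continuousOn
      (fun x _ => (hwd x).hasFDerivAt) Hi
  -- boundary terms vanish
  have hfront : ∀ i : Fin 2, ∀ x : Fin 1 → ℝ, w (Fin.insertNth i (b i) x) i = 0 := by
    intro i x
    have : w (Fin.insertNth i (b i) x) = 0 := by
      apply hout _ i
      rw [Fin.insertNth_apply_same]
      have h2 : b i = R+1 := rfl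
      rw [h2, abs_of_pos (by linarith)]
    rw [this]; rfl
  have hback : ∀ i : Fin 2, ∀ x : Fin 1 → ℝ, w (Fin.insertNth i (a i) x) i = 0 := by
    intro i x
    have : w (Fin.insertNth i (a i) x) = 0 := by
      apply hout _ i
      rw [Fin.insertNth_apply_same]
      have h2 : a i = -(R+1) := rfl
      rw [h2, abs_of_neg (by linarith)]
      linarith
    rw [this]; rfl
  have hz : ∀ x ∉ Icc a b, div2 w x = 0 := by
    intro x hx
    have hxout : x ∉ tsupport w := by
      intro hmem
      apply hx
      have hball := hRs hmem
      rw [Metric.mem_closedBall, dist_zero_right] at hball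
      constructor <;> intro i <;>
        have h1 : |x i| ≤ ‖x‖ := by simpa using norm_le_pi_norm x i
      · have h2 : a i = -(R+1) := rfl
        rw [h2]
        have := abs_le.mp (h1.trans hball)
        linarith [this.1]
      · have h2 : b i = R+1 := rfl
        rw [h2]
        have := abs_le.mp (h1.trans hball)
        linarith [this.2]
    have hev : ∀ j : Fin 2, (fun y => w y j) =ᶠ[nhds x] (fun _ => 0) := by
      intro j
      have hopen : IsOpen (tsupport w)ᶜ := (isClosed_tsupport w).isOpen_compl
      refine Filter.eventuallyEq_of_mem (hopen.mem_nhds hxout) ?_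
      intro y hy
      simp [image_eq_zero_of_notMem_tsupport hy]
    have hz0 : ∀ j : Fin 2, pd2 j (fun y => w y j) x = 0 := by
      intro j
      rw [pd2, Filter.EventuallyEq.fderiv_eq (hev j)]
      simp
    rw [div2, hz0 0, hz0 1, add_zero]
  have heq : ∫ x in Icc a b, ∑ i : Fin 2, fderiv ℝ w x (Pi.single i 1) i
      = ∫ x, div2 w x := by
    rw [show (fun x => ∑ i : Fin 2, fderiv ℝ w x (Pi.single i 1) i)
        = fun x => div2 w x from funext fun x => (div2_eq_sum (hwd x)).symm]
    exact setIntegral_eq_integral_of_forall_compl_eq_zero hz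
  rw [heq] at hdt
  rw [hdt]
  apply Finset.sum_eq_zero
  intro i _
  have h1 : (fun x : Fin 1 → ℝ => w (Fin.insertNth i (b i) x) i) = fun _ => (0:ℝ) :=
    funext (hfront i)
  have h2 : (fun x : Fin 1 → ℝ => w (Fin.insertNth i (a i) x) i) = fun _ => (0:ℝ) :=
    funext (hback i)
  simp only [h1, h2, integral_zero, sub_zero]

lemma integral_dot_grad {f : (Fin 2 → ℝ) → ℝ} {v : (Fin 2 → ℝ) → Fin 2 → ℝ}
    (hf : ContDiff ℝ (⊤ : ℕ∞) f) (hfc : HasCompactSupport f)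
    (hv : ContDiff ℝ (⊤ : ℕ∞) v) (hvc : HasCompactSupport v)
    (hdiv : ∀ x, div2 v x = 0) :
    ∫ x, dot2 (grad2 f x) (v x) = 0 := by
  have hfd : Differentiable ℝ f := hf.differentiable (by simp)
  have hvd : Differentiable ℝ v := hv.differentiable (by simp)
  have hvj : ∀ (j : Fin 2) (x : Fin 2 → ℝ), DifferentiableAt ℝ (fun y => v y j) x :=
    fun j x => differentiableAt_pi.mp (hvd x) j
  have key : ∀ x, div2 (fun y => f y • v y) x = dot2 (grad2 f x) (v x) := by
    intro x
    have e0 : (fun y => (f y • v y) 0) = fun y => f y * v y 0 := by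
      funext y; simp
    have e1 : (fun y => (f y • v y) 1) = fun y => f y * v y 1 := by
      funext y; simp
    have hd := hdiv x
    rw [div2] at hd ⊢
    rw [e0, e1, pd2_mul (hfd x) (hvj 0 x), pd2_mul (hfd x) (hvj 1 x)]
    simp only [dot2, grad2]
    simp [Matrix.cons_val_zero, Matrix.cons_val_one]
    linear_combination (f x) * hd
  have hs : ContDiff ℝ (⊤ : ℕ∞) (fun y => f y • v y) := hf.smul hv
  have hsc : HasCompactSupport (fun y => f y • v y) := hfc.smul_right
  calc ∫ x, dot2 (grad2 f x) (v x) = ∫ x, div2 (fun y => f y • v y) x := by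
        congr 1
        funext x
        rw [key x]
      _ = 0 := integral_div2_eq_zero hs hsc

lemma flux_zero {γ : (Fin 2 → ℝ) → ℝ} {v : (Fin 2 → ℝ) → Fin 2 → ℝ}
    (hγ : ContDiff ℝ (⊤ : ℕ∞) γ) (hγc : HasCompactSupport γ)
    (hv : ContDiff ℝ (⊤ : ℕ∞) v) (hvc : HasCompactSupport v)
    (hdiv : ∀ x, div2 v x = 0) :
    ∫ x, γ x * dot2 (grad2 γ x) (v x) = 0 := by
  have hγd : Differentiable ℝ γ := hγ.differentiable (by simp)
  have h2 := integral_dot_grad (f := fun y => γ y * γ y) (hγ.mul hγ) hγc.mul_right hv hvc hdiv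
  have hpt : ∀ x, dot2 (grad2 (fun y => γ y * γ y) x) (v x)
      = 2 * (γ x * dot2 (grad2 γ x) (v x)) := by
    intro x
    simp only [dot2, grad2, Matrix.cons_val_zero, Matrix.cons_val_one, Matrix.head_cons,
      pd2_mul (hγd x) (hγd x)]
    ring
  rw [show (fun x => dot2 (grad2 (fun y => γ y * γ y) x) (v x))
      = fun x => 2 * (γ x * dot2 (grad2 γ x) (v x)) from funext hpt] at h2
  rw [integral_const_mul] at h2
  linarith

lemma hcs_zero : HasCompactSupport (0 : (Fin 2 → ℝ) → ℝ) := by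
  have h : tsupport (0 : (Fin 2 → ℝ) → ℝ) = ∅ := by simp [tsupport]
  rw [HasCompactSupport, h]
  exact isCompact_empty

lemma hcs_dot_right {G w : (Fin 2 → ℝ) → Fin 2 → ℝ} (hw : HasCompactSupport w) :
    HasCompactSupport (fun x => dot2 (G x) (w x)) := by
  apply IsCompact.of_isClosed_subset hw (isClosed_tsupport _)
  apply closure_minimal ?_ (isClosed_tsupport _)
  intro x hx
  apply subset_closure
  intro h0
  apply hx
  have : w x = 0 := h0
  simp [dot2, this]


/-- **Enstrophy conservation for the compatible finite element incompressible
Euler scheme.**  For the scheme with divergence-free `u(t) ∈ V₁`, diagnostic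
vorticity `ω(t) ∈ V₀` defined by `⟨γ, ω⟩ = −⟨∇^⊥γ, u⟩`, and momentum equation
`⟨w, ∂u/∂t⟩ + ∫ ω (w·u^⊥) dx = 0` for all divergence-free `w ∈ V₁`, the
enstrophy `∫ ω(t)² dx` is constant in `t`. -/
theorem euler_scheme_enstrophy_conservation
    (V₀ : Submodule ℝ ((Fin 2 → ℝ) → ℝ))
    (V₁ : Submodule ℝ ((Fin 2 → ℝ) → Fin 2 → ℝ))
    [FiniteDimensional ℝ V₀] [FiniteDimensional ℝ V₁]
    (hV₀ : ∀ γ ∈ V₀, ContDiff ℝ (⊤ : ℕ∞) γ ∧ HasCompactSupport γ)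
    (hV₁ : ∀ w ∈ V₁, ContDiff ℝ (⊤ : ℕ∞) w ∧ HasCompactSupport w)
    (hcurl : ∀ γ ∈ V₀, gradPerp2 γ ∈ V₁)
    (u u' : ℝ → (Fin 2 → ℝ) → Fin 2 → ℝ)
    (hu_mem : ∀ t, u t ∈ V₁) (hu'_mem : ∀ t, u' t ∈ V₁)
    (hu_deriv : ∀ t x, HasDerivAt (fun s => u s x) (u' t x) t)
    (hu'_cont : ∀ x, Continuous fun t => u' t x)
    (hu_div : ∀ t x, div2 (u t) x = 0)
    (ω ω' : ℝ → (Fin 2 → ℝ) → ℝ)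
    (hω_mem : ∀ t, ω t ∈ V₀) (hω'_mem : ∀ t, ω' t ∈ V₀)
    (hω_deriv : ∀ t x, HasDerivAt (fun s => ω s x) (ω' t x) t)
    (hω'_cont : ∀ x, Continuous fun t => ω' t x)
    (hω_def : ∀ t, ∀ γ ∈ V₀,
      ∫ x, γ x * ω t x = - ∫ x, dot2 (gradPerp2 γ x) (u t x))
    (hmom : ∀ t, ∀ w ∈ V₁, (∀ x, div2 w x = 0) →
      (∫ x, dot2 (w x) (u' t x))
        + (∫ x, ω t x * dot2 (w x) (perp2 (u t x))) = 0) :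
    ∀ s t : ℝ, ∫ x, (ω t x) ^ 2 = ∫ x, (ω s x) ^ 2 := by
  classical
  have hωs : ∀ t, ContDiff ℝ (⊤ : ℕ∞) (ω t) := fun t => (hV₀ _ (hω_mem t)).1
  have hωc : ∀ t, HasCompactSupport (ω t) := fun t => (hV₀ _ (hω_mem t)).2
  have hintV₀ : ∀ γ ∈ V₀, ∀ v ∈ V₀, Integrable (fun x => γ x * v x) := by
    intro γ hγ v hv
    exact ((hV₀ γ hγ).1.continuous.mul (hV₀ v hv).1.continuous).integrable_of_hasCompactSupport
      ((hV₀ γ hγ).2.mul_right)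
  have hintV₁ : ∀ γ ∈ V₀, ∀ w ∈ V₁, Integrable (fun x => dot2 (gradPerp2 γ x) (w x)) := by
    intro γ hγ w hw
    have hGP0 : Continuous fun x => gradPerp2 γ x 0 := by
      have e : (fun x => gradPerp2 γ x 0) = fun x => -(pd2 1 γ x) := by
        funext x; simp [gradPerp2]
      rw [e]
      exact ((pd2_contDiff (hV₀ γ hγ).1 1).continuous).neg
    have hGP1 : Continuous fun x => gradPerp2 γ x 1 := by
      have e : (fun x => gradPerp2 γ x 1) = fun x => pd2 0 γ x := by
        funext x; simp [gradPerp2]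
      rw [e]
      exact (pd2_contDiff (hV₀ γ hγ).1 0).continuous
    have hwc : Continuous w := (hV₁ w hw).1.continuous
    have hcont : Continuous fun x => dot2 (gradPerp2 γ x) (w x) := by
      apply Continuous.add
      · exact hGP0.mul ((continuous_apply 0).comp hwc)
      · exact hGP1.mul ((continuous_apply 1).comp hwc)
    exact hcont.integrable_of_hasCompactSupport (hcs_dot_right (hV₁ w hw).2)
  -- Claim 1 : differentiated vorticity constraint
  have claim1 : ∀ (t : ℝ) (γ : (Fin 2 → ℝ) → ℝ), γ ∈ V₀ →
      ∫ x, γ x * ω' t x = - ∫ x, dot2 (gradPerp2 γ x) (u' t x) := by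
    intro t γ hγ
    let L₀ : V₀ →ₗ[ℝ] ℝ :=
      { toFun := fun v => ∫ x, γ x * (v : (Fin 2 → ℝ) → ℝ) x
        map_add' := by
          intro v w
          have hv := hintV₀ γ hγ v v.2
          have hw := hintV₀ γ hγ w w.2
          simp only [Submodule.coe_add, Pi.add_apply, mul_add]
          rw [integral_add hv hw]
        map_smul' := by
          intro c v
          simp only [Submodule.coe_smul, Pi.smul_apply, smul_eq_mul, RingHom.id_apply]
          rw [← integral_const_mul]
          congr 1; funext x; ring }
    let L₁ : V₁ →ₗ[ℝ] ℝ :=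
      { toFun := fun v => ∫ x, dot2 (gradPerp2 γ x) ((v : (Fin 2 → ℝ) → Fin 2 → ℝ) x)
        map_add' := by
          intro v w
          have hv := hintV₁ γ hγ v v.2
          have hw := hintV₁ γ hγ w w.2
          have e : (fun x => dot2 (gradPerp2 γ x) (((v + w : V₁) : (Fin 2 → ℝ) → Fin 2 → ℝ) x))
              = fun x => dot2 (gradPerp2 γ x) ((v : (Fin 2 → ℝ) → Fin 2 → ℝ) x)
                + dot2 (gradPerp2 γ x) ((w : (Fin 2 → ℝ) → Fin 2 → ℝ) x) := by
            funext x
            simp only [dot2, Submodule.coe_add, Pi.add_apply]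
            ring
          rw [e, integral_add hv hw]
        map_smul' := by
          intro c v
          have e : (fun x => dot2 (gradPerp2 γ x) (((c • v : V₁) : (Fin 2 → ℝ) → Fin 2 → ℝ) x))
              = fun x => c * dot2 (gradPerp2 γ x) ((v : (Fin 2 → ℝ) → Fin 2 → ℝ) x) := by
            funext x
            simp only [dot2, Submodule.coe_smul, Pi.smul_apply, smul_eq_mul]
            ring
          rw [e, integral_const_mul]
          rfl }
    have hd0 := hasDerivAt_linearMap_comp V₀ hω_mem hω'_mem hω_deriv L₀ t
    have hd1 := hasDerivAt_linearMap_comp V₁ hu_mem hu'_mem hu_deriv L₁ t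
    have hFG : (fun s => L₀ ⟨ω s, hω_mem s⟩) = fun s => -(L₁ ⟨u s, hu_mem s⟩) := by
      funext s
      exact hω_def s γ hγ
    have hd1' : HasDerivAt (fun s => L₀ ⟨ω s, hω_mem s⟩) (-(L₁ ⟨u' t, hu'_mem t⟩)) t := by
      rw [hFG]; exact hd1.neg
    exact hd0.unique hd1'
  -- Claim 2 : ∫ ω ω' = 0
  have hI : ∀ t : ℝ, ∫ x, ω t x * ω' t x = 0 := by
    intro t
    have h1 := claim1 t (ω t) (hω_mem t)
    have hw1 : gradPerp2 (ω t) ∈ V₁ := hcurl _ (hω_mem t)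
    have hdf : ∀ x, div2 (gradPerp2 (ω t)) x = 0 := div2_gradPerp2 (hωs t)
    have h2 := hmom t (gradPerp2 (ω t)) hw1 hdf
    rw [show (fun x => ω t x * dot2 (gradPerp2 (ω t) x) (perp2 (u t x)))
        = fun x => ω t x * dot2 (grad2 (ω t) x) (u t x) from
      funext fun x => by rw [dot2_gradPerp2_perp2]] at h2
    have h4 : ∫ x, ω t x * dot2 (grad2 (ω t) x) (u t x) = 0 :=
      flux_zero (hωs t) (hωc t) (hV₁ _ (hu_mem t)).1 (hV₁ _ (hu_mem t)).2 (hu_div t)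
    rw [h1]
    linarith
  -- the product space W
  obtain ⟨A, hA⟩ := (Submodule.fg_iff_finiteDimensional V₀).mpr ‹_›
  have hAsub : (A : Set ((Fin 2 → ℝ) → ℝ)) ⊆ V₀ := by
    rw [← hA]
    exact Submodule.subset_span
  set mulL := LinearMap.mul ℝ ((Fin 2 → ℝ) → ℝ) with hmulL
  set Wset : Set ((Fin 2 → ℝ) → ℝ) :=
    Set.image2 (fun m n => mulL m n) (A : Set _) (A : Set _) with hWset
  set W : Submodule ℝ ((Fin 2 → ℝ) → ℝ) := Submodule.span ℝ Wset with hW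
  have hWfd : FiniteDimensional ℝ W :=
    FiniteDimensional.span_of_finite ℝ (Set.Finite.image2 _ A.finite_toSet A.finite_toSet)
  have hmul_mem : ∀ a ∈ V₀, ∀ b ∈ V₀, a * b ∈ W := by
    intro a ha b hb
    have h := Submodule.map₂_span_span ℝ mulL (A : Set _) (A : Set _)
    rw [hA] at h
    rw [hW, hWset, ← h]
    exact Submodule.apply_mem_map₂ _ ha hb
  have hWcc : ∀ v ∈ W, Continuous v ∧ HasCompactSupport v := by
    intro v hv
    rw [hW] at hv
    induction hv using Submodule.span_induction with
    | mem x h =>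
      obtain ⟨p, hp, q, hq, rfl⟩ := h
      have hp' := hV₀ p (hAsub hp)
      have hq' := hV₀ q (hAsub hq)
      constructor
      · exact hp'.1.continuous.mul hq'.1.continuous
      · exact hp'.2.mul_right
    | zero => exact ⟨continuous_const, hcs_zero⟩
    | add x y hx hy ihx ihy =>
      exact ⟨ihx.1.add ihy.1, ihx.2.add ihy.2⟩
    | smul c x hx ih =>
      refine ⟨ih.1.const_smul c, ?_⟩
      have : (c • x : (Fin 2 → ℝ) → ℝ) = (fun r : ℝ => c * r) ∘ x := by
        funext y; simp
      rw [this]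
      exact ih.2.comp_left (by simp)
  have hWint : ∀ v ∈ W, Integrable (v : (Fin 2 → ℝ) → ℝ) := fun v hv =>
    (hWcc v hv).1.integrable_of_hasCompactSupport (hWcc v hv).2
  let LW : W →ₗ[ℝ] ℝ :=
    { toFun := fun v => ∫ x, (v : (Fin 2 → ℝ) → ℝ) x
      map_add' := by
        intro v w
        simp only [Submodule.coe_add, Pi.add_apply]
        exact integral_add (hWint v v.2) (hWint w w.2)
      map_smul' := by
        intro c v
        simp only [Submodule.coe_smul, Pi.smul_apply, smul_eq_mul, RingHom.id_apply]
        rw [integral_const_mul] }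
  have hfW : ∀ s : ℝ, (ω s * ω s : (Fin 2 → ℝ) → ℝ) ∈ W := fun s =>
    hmul_mem _ (hω_mem s) _ (hω_mem s)
  have hf'W : ∀ t : ℝ, (ω' t * ω t + ω t * ω' t : (Fin 2 → ℝ) → ℝ) ∈ W := fun t =>
    W.add_mem (hmul_mem _ (hω'_mem t) _ (hω_mem t)) (hmul_mem _ (hω_mem t) _ (hω'_mem t))
  have hdW : ∀ (t : ℝ) (x : Fin 2 → ℝ),
      HasDerivAt (fun s => (ω s * ω s : (Fin 2 → ℝ) → ℝ) x)
        ((ω' t * ω t + ω t * ω' t : (Fin 2 → ℝ) → ℝ) x) t := by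
    intro t x
    exact (hω_deriv t x).mul (hω_deriv t x)
  have hN : ∀ t : ℝ, HasDerivAt (fun s => ∫ x, (ω s x) ^ 2) 0 t := by
    intro t
    have h := hasDerivAt_linearMap_comp W hfW hf'W hdW LW t
    have e1 : (fun s => LW ⟨ω s * ω s, hfW s⟩) = fun s => ∫ x, (ω s x) ^ 2 := by
      funext s
      show (∫ x, (ω s * ω s : (Fin 2 → ℝ) → ℝ) x) = _
      congr 1
      funext x
      simp [Pi.mul_apply, pow_two]
    have e2 : LW ⟨ω' t * ω t + ω t * ω' t, hf'W t⟩ = 0 := by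
      show (∫ x, (ω' t * ω t + ω t * ω' t : (Fin 2 → ℝ) → ℝ) x) = 0
      have i1 : Integrable (fun x => ω' t x * ω t x) :=
        hintV₀ _ (hω'_mem t) _ (hω_mem t)
      have i2 : Integrable (fun x => ω t x * ω' t x) :=
        hintV₀ _ (hω_mem t) _ (hω'_mem t)
      have e3 : (fun x => (ω' t * ω t + ω t * ω' t : (Fin 2 → ℝ) → ℝ) x)
          = fun x => ω' t x * ω t x + ω t x * ω' t x := by
        funext x; simp [Pi.mul_apply, Pi.add_apply]
      rw [e3, integral_add i1 i2]
      have e4 : (fun x => ω' t x * ω t x) = fun x => ω t x * ω' t x := by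
        funext x; ring
      rw [e4, hI t]
      ring
    rw [e1, e2] at h
    exact h
  intro s t
  exact is_const_of_deriv_eq_zero (fun r => (hN r).differentiableAt)
    (fun r => (hN r).deriv) t s
end

section
/- For the energy–enstrophy conserving shallow water scheme, the Hamiltonian H(t) = ∫_{ℝ²} ½ D|u|² + g D (½D + b) dx is constant in t. -/
open MeasureTheory

section AuxSWE

variable {X : Type*} {E : Type*} [NormedAddCommGroup E] [NormedSpace ℝ E]

/-- evaluation at a point as a linear map on a submodule of functions -/
noncomputable def sweEvalAtL (V : Submodule ℝ (X → E)) (x : X) : V →ₗ[ℝ] E :=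
  (LinearMap.proj x).comp V.subtype

lemma swe_exists_sep_finset (V : Submodule ℝ (X → E)) [FiniteDimensional ℝ V] :
    ∃ s : Finset X, ∀ v : V, (∀ x ∈ s, (v : X → E) x = 0) → v = 0 := by
  classical
  set 𝒮 : Set (Submodule ℝ V) :=
    {W | ∃ s : Finset X, W = ⨅ x ∈ s, LinearMap.ker (sweEvalAtL V x)} with h𝒮
  have htop : (⊤ : Submodule ℝ V) ∈ 𝒮 := ⟨∅, by simp⟩
  obtain ⟨W, hW, hmin⟩ := IsArtinian.set_has_minimal 𝒮 ⟨⊤, htop⟩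
  obtain ⟨s, rfl⟩ := hW
  refine ⟨s, fun v hv => ?_⟩
  have hWbot : (⨅ x ∈ s, LinearMap.ker (sweEvalAtL V x)) = ⊥ := by
    by_contra hne
    obtain ⟨v₀, hv₀mem, hv₀ne⟩ := Submodule.exists_mem_ne_zero_of_ne_bot hne
    have : ∃ x, (v₀ : X → E) x ≠ 0 := by
      by_contra hall
      push_neg at hall
      exact hv₀ne (Subtype.ext (funext hall))
    obtain ⟨x₀, hx₀⟩ := this
    have hlt : (⨅ x ∈ insert x₀ s, LinearMap.ker (sweEvalAtL V x))
        < ⨅ x ∈ s, LinearMap.ker (sweEvalAtL V x) := by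
      rw [Finset.iInf_insert]
      refine lt_of_le_of_ne inf_le_right fun heq => ?_
      have : v₀ ∈ LinearMap.ker (sweEvalAtL V x₀) ⊓ ⨅ x ∈ s, LinearMap.ker (sweEvalAtL V x) := by
        rw [heq]; exact hv₀mem
      exact hx₀ this.1
    exact hmin _ ⟨insert x₀ s, rfl⟩ hlt
  have : v ∈ ⨅ x ∈ s, LinearMap.ker (sweEvalAtL V x) := by
    simp only [Submodule.mem_iInf, LinearMap.mem_ker]
    exact fun x hx => hv x hx
  rw [hWbot] at this
  exact this

/-- joint continuity of a pointwise-continuous path in a finite-dimensional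
space of continuous functions -/
lemma swe_jointCont [TopologicalSpace X] [FiniteDimensional ℝ E]
    (V : Submodule ℝ (X → E)) [FiniteDimensional ℝ V]
    (hVc : ∀ v ∈ V, Continuous v)
    (c : ℝ → X → E) (hc : ∀ t, c t ∈ V) (hcont : ∀ x, Continuous fun t => c t x) :
    Continuous fun p : ℝ × X => c p.1 p.2 := by
  classical
  obtain ⟨s, hs⟩ := swe_exists_sep_finset V
  set Φ : V →ₗ[ℝ] (s → E) := LinearMap.pi (fun x : s => sweEvalAtL V x) with hΦ
  have hΦinj : LinearMap.ker Φ = ⊥ := by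
    rw [LinearMap.ker_eq_bot']
    intro v hv
    refine hs v fun x hx => ?_
    have := congrFun hv ⟨x, hx⟩
    simpa [Φ, sweEvalAtL] using this
  obtain ⟨Ψ, hΨ⟩ := Φ.exists_leftInverse_of_injective hΦinj
  set n := Module.finrank ℝ (s → E)
  set B : Module.Basis (Fin n) ℝ (s → E) := Module.finBasis ℝ (s → E)
  have key : ∀ t x, c t x = ∑ i, B.repr (Φ ⟨c t, hc t⟩) i • ((Ψ (B i) : X → E) x) := by
    intro t x
    have h1 : (⟨c t, hc t⟩ : V) = Ψ (Φ ⟨c t, hc t⟩) := by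
      have := congrArg (fun (L : V →ₗ[ℝ] V) => L ⟨c t, hc t⟩) hΨ
      simpa using this.symm
    have h2 : Ψ (Φ ⟨c t, hc t⟩) = ∑ i, B.repr (Φ ⟨c t, hc t⟩) i • Ψ (B i) := by
      conv_lhs => rw [← B.sum_repr (Φ ⟨c t, hc t⟩)]
      rw [map_sum]; simp only [_root_.map_smul]
    have h3 : (⟨c t, hc t⟩ : V) = ∑ i, B.repr (Φ ⟨c t, hc t⟩) i • Ψ (B i) := h1.trans h2
    have h4 := congrArg (fun v : V => (v : X → E) x) h3
    simpa using h4
  have hΦc : Continuous fun t => Φ ⟨c t, hc t⟩ := by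
    refine continuous_pi fun x => ?_
    simpa [Φ, sweEvalAtL] using hcont x
  have hrepr_cont : ∀ i, Continuous fun t => B.repr (Φ ⟨c t, hc t⟩) i := by
    intro i
    have hlin : Continuous fun y : s → E => B.repr y i :=
      (B.coord i).continuous_of_finiteDimensional
    exact hlin.comp hΦc
  have : Continuous fun p : ℝ × X =>
      ∑ i, B.repr (Φ ⟨c p.1, hc p.1⟩) i • ((Ψ (B i) : X → E) p.2) := by
    refine continuous_finset_sum _ fun i _ => ?_
    exact ((hrepr_cont i).comp continuous_fst).smul
      ((hVc _ (Ψ (B i)).2).comp continuous_snd)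
  convert this using 2 with p
  exact key p.1 p.2

/-- a finite-dimensional space of compactly supported functions has a common
compact support -/
lemma swe_exists_common_support [TopologicalSpace X]
    (V : Submodule ℝ (X → E)) [FiniteDimensional ℝ V]
    (h : ∀ v ∈ V, HasCompactSupport v) :
    ∃ K : Set X, IsCompact K ∧ ∀ v ∈ V, ∀ x ∉ K, v x = 0 := by
  classical
  set n := Module.finrank ℝ V
  set B : Module.Basis (Fin n) ℝ V := Module.finBasis ℝ V
  refine ⟨⋃ i, tsupport ((B i : X → E)), isCompact_iUnion fun i => h _ (B i).2, ?_⟩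
  intro v hv x hx
  have hx' : ∀ i, ((B i : X → E)) x = 0 := by
    intro i
    exact image_eq_zero_of_notMem_tsupport fun hmem => hx (Set.mem_iUnion.2 ⟨i, hmem⟩)
  have hrepr : (⟨v, hv⟩ : V) = ∑ i, B.repr ⟨v, hv⟩ i • B i := (B.sum_repr _).symm
  have := congrArg (fun w : V => (w : X → E) x) hrepr
  simp only at this
  rw [this, Submodule.coe_sum]
  simp [hx']

end AuxSWE

/-- **Energy conservation for the energy–enstrophy conserving compatible
finite element rotating shallow water scheme** (McRae–Cotter): the Hamiltonian
`H(t) = ∫ ½D|u|² + gD(½D + b) dx` is constant in `t`. -/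
theorem swe_scheme_energy_conservation
    (V₀ : Submodule ℝ ((Fin 2 → ℝ) → ℝ))
    (V₁ : Submodule ℝ ((Fin 2 → ℝ) → Fin 2 → ℝ))
    (V₂ : Submodule ℝ ((Fin 2 → ℝ) → ℝ))
    [FiniteDimensional ℝ V₀] [FiniteDimensional ℝ V₁] [FiniteDimensional ℝ V₂]
    (hV₀ : ∀ γ ∈ V₀, ContDiff ℝ (⊤ : ℕ∞) γ ∧ HasCompactSupport γ)
    (hV₁ : ∀ w ∈ V₁, ContDiff ℝ (⊤ : ℕ∞) w ∧ HasCompactSupport w)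
    (hV₂ : ∀ φ ∈ V₂, ContDiff ℝ (⊤ : ℕ∞) φ ∧ HasCompactSupport φ)
    (hcurl : ∀ γ ∈ V₀, gradPerp2 γ ∈ V₁)
    (hdiv : ∀ w ∈ V₁, div2 w ∈ V₂)
    (g : ℝ) (b f : (Fin 2 → ℝ) → ℝ)
    (hb : ContDiff ℝ (⊤ : ℕ∞) b) (hf : ContDiff ℝ (⊤ : ℕ∞) f)
    (u u' m m' : ℝ → (Fin 2 → ℝ) → Fin 2 → ℝ)
    (D D' : ℝ → (Fin 2 → ℝ) → ℝ) (q q' : ℝ → (Fin 2 → ℝ) → ℝ)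
    (hu_mem : ∀ t, u t ∈ V₁) (hu'_mem : ∀ t, u' t ∈ V₁)
    (hm_mem : ∀ t, m t ∈ V₁) (hm'_mem : ∀ t, m' t ∈ V₁)
    (hD_mem : ∀ t, D t ∈ V₂) (hD'_mem : ∀ t, D' t ∈ V₂)
    (hq_mem : ∀ t, q t ∈ V₀) (hq'_mem : ∀ t, q' t ∈ V₀)
    (hu_deriv : ∀ t x, HasDerivAt (fun s => u s x) (u' t x) t)
    (hm_deriv : ∀ t x, HasDerivAt (fun s => m s x) (m' t x) t)
    (hD_deriv : ∀ t x, HasDerivAt (fun s => D s x) (D' t x) t)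
    (hq_deriv : ∀ t x, HasDerivAt (fun s => q s x) (q' t x) t)
    (hu'_cont : ∀ x, Continuous fun t => u' t x)
    (hm'_cont : ∀ x, Continuous fun t => m' t x)
    (hD'_cont : ∀ x, Continuous fun t => D' t x)
    (hq'_cont : ∀ x, Continuous fun t => q' t x)
    (hmom : ∀ t, ∀ w ∈ V₁,
      (∫ x, dot2 (w x) (u' t x))
        + (∫ x, q t x * dot2 (w x) (perp2 (m t x)))
        - (∫ x, div2 w x
            * ((1/2 : ℝ) * dot2 (u t x) (u t x) + g * (D t x + b x))) = 0)
    (hcont : ∀ t, ∀ φ ∈ V₂, ∫ x, φ x * (D' t x + div2 (m t) x) = 0)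
    (hpv : ∀ t, ∀ γ ∈ V₀,
      (∫ x, γ x * (q t x * D t x)) + (∫ x, dot2 (gradPerp2 γ x) (u t x))
        - (∫ x, γ x * f x) = 0)
    (hflux : ∀ t, ∀ v ∈ V₁, ∫ x, dot2 (v x) (m t x - D t x • u t x) = 0) :
    ∀ s t : ℝ,
      (∫ x, (1/2 : ℝ) * D t x * dot2 (u t x) (u t x)
          + g * D t x * ((1/2 : ℝ) * D t x + b x))
        = ∫ x, (1/2 : ℝ) * D s x * dot2 (u s x) (u s x)
          + g * D s x * ((1/2 : ℝ) * D s x + b x) := by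
  classical
  -- the integrand and its time derivative
  set F : ℝ → (Fin 2 → ℝ) → ℝ := fun t x =>
    (1/2 : ℝ) * D t x * dot2 (u t x) (u t x)
      + g * D t x * ((1/2 : ℝ) * D t x + b x) with hFdef
  set F' : ℝ → (Fin 2 → ℝ) → ℝ := fun t x =>
    (1/2 : ℝ) * D' t x * dot2 (u t x) (u t x)
      + D t x * dot2 (u t x) (u' t x)
      + g * D' t x * (D t x + b x) with hF'def
  -- basic continuity facts in x
  have cD : ∀ t, Continuous (D t) := fun t => (hV₂ _ (hD_mem t)).1.continuous
  have cD' : ∀ t, Continuous (D' t) := fun t => (hV₂ _ (hD'_mem t)).1.continuous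
  have cu : ∀ t, Continuous (u t) := fun t => (hV₁ _ (hu_mem t)).1.continuous
  have cu' : ∀ t, Continuous (u' t) := fun t => (hV₁ _ (hu'_mem t)).1.continuous
  have cm : ∀ t, Continuous (m t) := fun t => (hV₁ _ (hm_mem t)).1.continuous
  have cdivm : ∀ t, Continuous (div2 (m t)) :=
    fun t => (hV₂ _ (hdiv _ (hm_mem t))).1.continuous
  have cb : Continuous b := hb.continuous
  -- common compact support of V₂
  obtain ⟨K, hK, hKsupp⟩ := swe_exists_common_support V₂ (fun v hv => (hV₂ v hv).2)
  -- joint continuity of D, D', u, u'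
  have jD : Continuous fun p : ℝ × (Fin 2 → ℝ) => D p.1 p.2 :=
    swe_jointCont V₂ (fun v hv => (hV₂ v hv).1.continuous) D hD_mem
      (fun x => continuous_iff_continuousAt.2 fun t => (hD_deriv t x).continuousAt)
  have jD' : Continuous fun p : ℝ × (Fin 2 → ℝ) => D' p.1 p.2 :=
    swe_jointCont V₂ (fun v hv => (hV₂ v hv).1.continuous) D' hD'_mem hD'_cont
  have ju : Continuous fun p : ℝ × (Fin 2 → ℝ) => u p.1 p.2 :=
    swe_jointCont V₁ (fun v hv => (hV₁ v hv).1.continuous) u hu_mem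
      (fun x => continuous_iff_continuousAt.2 fun t => (hu_deriv t x).continuousAt)
  have ju' : Continuous fun p : ℝ × (Fin 2 → ℝ) => u' p.1 p.2 :=
    swe_jointCont V₁ (fun v hv => (hV₁ v hv).1.continuous) u' hu'_mem hu'_cont
  have ju0 : Continuous fun p : ℝ × (Fin 2 → ℝ) => u p.1 p.2 0 := (continuous_apply 0).comp ju
  have ju1 : Continuous fun p : ℝ × (Fin 2 → ℝ) => u p.1 p.2 1 := (continuous_apply 1).comp ju
  have ju'0 : Continuous fun p : ℝ × (Fin 2 → ℝ) => u' p.1 p.2 0 := (continuous_apply 0).comp ju'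
  have ju'1 : Continuous fun p : ℝ × (Fin 2 → ℝ) => u' p.1 p.2 1 := (continuous_apply 1).comp ju'
  have jb : Continuous fun p : ℝ × (Fin 2 → ℝ) => b p.2 := cb.comp continuous_snd
  -- joint continuity of F'
  have jF' : Continuous fun p : ℝ × (Fin 2 → ℝ) => F' p.1 p.2 := by
    simp only [hF'def, dot2]
    exact ((((continuous_const.mul jD').mul ((ju0.mul ju0).add (ju1.mul ju1))).add
      (jD.mul ((ju0.mul ju'0).add (ju1.mul ju'1)))).add
      ((continuous_const.mul jD').mul (jD.add jb)))
  -- pointwise time derivative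
  have hFderiv : ∀ t x, HasDerivAt (fun s => F s x) (F' t x) t := by
    intro t x
    have hD := hD_deriv t x
    have hu0 : HasDerivAt (fun s => u s x 0) (u' t x 0) t := hasDerivAt_pi.1 (hu_deriv t x) 0
    have hu1 : HasDerivAt (fun s => u s x 1) (u' t x 1) t := hasDerivAt_pi.1 (hu_deriv t x) 1
    have h1 := (((hD.const_mul (1/2 : ℝ)).mul ((hu0.mul hu0).add (hu1.mul hu1)))).add
      ((hD.const_mul g).mul ((hD.const_mul (1/2 : ℝ)).add_const (b x)))
    have : (fun s => F s x) = fun s =>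
        1/2 * D s x * (u s x 0 * u s x 0 + u s x 1 * u s x 1)
          + g * D s x * (1/2 * D s x + b x) := by
      funext s; simp only [hFdef, dot2]
    rw [this]
    simp only [Pi.mul_def, Pi.add_def] at h1
    refine h1.congr_deriv ?_
    simp only [hF'def, dot2]
    ring
  -- the Hamiltonian and its derivative
  set H : ℝ → ℝ := fun t => ∫ x, F t x with hHdef
  -- x-continuity and compact support of F t, F' t
  have cFx : ∀ t, Continuous (F t) := by
    intro t
    simp only [hFdef, dot2]
    have c0 : Continuous fun x => u t x 0 := (continuous_apply 0).comp (cu t)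
    have c1 : Continuous fun x => u t x 1 := (continuous_apply 1).comp (cu t)
    exact ((continuous_const.mul (cD t)).mul ((c0.mul c0).add (c1.mul c1))).add
      ((continuous_const.mul (cD t)).mul ((continuous_const.mul (cD t)).add cb))
  have suppF : ∀ t, ∀ x ∉ K, F t x = 0 := by
    intro t x hx
    have h0 : D t x = 0 := hKsupp _ (hD_mem t) x hx
    simp only [hFdef, h0]; ring
  have suppF' : ∀ t, ∀ x ∉ K, F' t x = 0 := by
    intro t x hx
    have h0 : D t x = 0 := hKsupp _ (hD_mem t) x hx
    have h0' : D' t x = 0 := hKsupp _ (hD'_mem t) x hx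
    simp only [hF'def, h0, h0']; ring
  have intF : ∀ t, Integrable (F t) := by
    intro t
    exact (cFx t).integrable_of_hasCompactSupport (HasCompactSupport.intro hK (suppF t))
  -- H is differentiable with derivative ∫ F' t
  have hHderiv : ∀ t₀ : ℝ, HasDerivAt H (∫ x, F' t₀ x) t₀ := by
    intro t₀
    have hS : IsCompact ((Metric.closedBall t₀ 1) ×ˢ K) := (isCompact_closedBall t₀ 1).prod hK
    obtain ⟨C, hC⟩ := hS.exists_bound_of_continuousOn jF'.continuousOn
    refine (hasDerivAt_integral_of_dominated_loc_of_deriv_le (Metric.ball_mem_nhds t₀ one_pos)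
      (Filter.Eventually.of_forall fun t => (cFx t).aestronglyMeasurable)
      (intF t₀)
      ((jF'.comp (Continuous.prodMk_right t₀)).aestronglyMeasurable)
      (bound := K.indicator fun _ => |C|)
      (Filter.Eventually.of_forall fun x => ?_)
      ?_
      (Filter.Eventually.of_forall fun x t _ => hFderiv t x)).2
    · intro t ht
      by_cases hx : x ∈ K
      · rw [Set.indicator_of_mem hx]
        have := hC (t, x) ⟨Metric.ball_subset_closedBall ht, hx⟩
        exact this.trans (le_abs_self C)
      · rw [Set.indicator_of_notMem hx, suppF' t x hx]
        simp
    · rw [integrable_indicator_iff hK.isClosed.measurableSet]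
      exact integrableOn_const hK.measure_lt_top.ne
  -- the derivative vanishes
  have hzero : ∀ t : ℝ, (∫ x, F' t x) = 0 := by
    intro t
    set G : (Fin 2 → ℝ) → ℝ := fun x =>
      (1/2 : ℝ) * dot2 (u t x) (u t x) + g * (D t x + b x) with hGdef
    have cG : Continuous G := by
      simp only [hGdef, dot2]
      have c0 : Continuous fun x => u t x 0 := (continuous_apply 0).comp (cu t)
      have c1 : Continuous fun x => u t x 1 := (continuous_apply 1).comp (cu t)
      exact (continuous_const.mul ((c0.mul c0).add (c1.mul c1))).add
        (continuous_const.mul ((cD t).add cb))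
    have cdot_u'm : Continuous fun x => dot2 (u' t x) (m t x) := by
      simp only [dot2]
      exact (((continuous_apply 0).comp (cu' t)).mul ((continuous_apply 0).comp (cm t))).add
        (((continuous_apply 1).comp (cu' t)).mul ((continuous_apply 1).comp (cm t)))
    have cdot_u'u : Continuous fun x => dot2 (u' t x) (u t x) := by
      simp only [dot2]
      exact (((continuous_apply 0).comp (cu' t)).mul ((continuous_apply 0).comp (cu t))).add
        (((continuous_apply 1).comp (cu' t)).mul ((continuous_apply 1).comp (cu t)))
    have cdot_uu' : Continuous fun x => dot2 (u t x) (u' t x) := by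
      simp only [dot2]
      exact (((continuous_apply 0).comp (cu t)).mul ((continuous_apply 0).comp (cu' t))).add
        (((continuous_apply 1).comp (cu t)).mul ((continuous_apply 1).comp (cu' t)))
    -- integrability facts
    have i1 : Integrable fun x => D' t x * G x :=
      ((cD' t).mul cG).integrable_of_hasCompactSupport ((hV₂ _ (hD'_mem t)).2.mul_right)
    have i2 : Integrable fun x => div2 (m t) x * G x :=
      ((cdivm t).mul cG).integrable_of_hasCompactSupport
        ((hV₂ _ (hdiv _ (hm_mem t))).2.mul_right)
    have hu'supp : IsCompact (tsupport (u' t)) := (hV₁ _ (hu'_mem t)).2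
    have i3 : Integrable fun x => dot2 (u' t x) (m t x) := by
      refine cdot_u'm.integrable_of_hasCompactSupport (HasCompactSupport.intro hu'supp ?_)
      intro x hx
      have h0 : u' t x = 0 := image_eq_zero_of_notMem_tsupport hx
      simp [dot2, h0]
    have i4 : Integrable fun x => D t x * dot2 (u' t x) (u t x) :=
      ((cD t).mul cdot_u'u).integrable_of_hasCompactSupport ((hV₂ _ (hD_mem t)).2.mul_right)
    have i4' : Integrable fun x => D t x * dot2 (u t x) (u' t x) :=
      ((cD t).mul cdot_uu').integrable_of_hasCompactSupport ((hV₂ _ (hD_mem t)).2.mul_right)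
    -- (a) D' + div m = 0 a.e.
    have hmemh : (fun x => D' t x + div2 (m t) x) ∈ V₂ :=
      V₂.add_mem (hD'_mem t) (hdiv _ (hm_mem t))
    have ihh : Integrable fun x => (D' t x + div2 (m t) x) * (D' t x + div2 (m t) x) :=
      (((cD' t).add (cdivm t)).mul ((cD' t).add (cdivm t))).integrable_of_hasCompactSupport
        ((hV₂ _ hmemh).2.mul_right)
    have hsqzero : (∫ x, (D' t x + div2 (m t) x) * (D' t x + div2 (m t) x)) = 0 :=
      hcont t (fun x => D' t x + div2 (m t) x) hmemh
    have hae : (fun x => (D' t x + div2 (m t) x) * (D' t x + div2 (m t) x))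
        =ᵐ[volume] 0 :=
      (integral_eq_zero_iff_of_nonneg (fun x => mul_self_nonneg _) ihh).1 hsqzero
    have heq0 : (fun x => D' t x + div2 (m t) x) =ᵐ[volume] 0 := by
      refine hae.mono fun x hx => ?_
      simp only [Pi.zero_apply] at hx ⊢
      exact mul_self_eq_zero.1 hx
    -- (b) ∫ D' G + ∫ div m · G = 0
    have eC : (∫ x, D' t x * G x) + (∫ x, div2 (m t) x * G x) = 0 := by
      rw [← integral_add i1 i2]
      have : (fun x => D' t x * G x + div2 (m t) x * G x) =ᵐ[volume] 0 := by
        refine heq0.mono fun x hx => ?_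
        simp only [Pi.zero_apply] at hx ⊢
        have : (D' t x + div2 (m t) x) * G x = 0 := by rw [hx]; ring
        linarith [this]
      rw [integral_congr_ae this]
      simp
    -- (c) ∫ dot2 u' m = ∫ D dot2 u' u  (from the flux equation)
    have eB : (∫ x, dot2 (u' t x) (m t x)) = ∫ x, D t x * dot2 (u' t x) (u t x) := by
      have h0 := hflux t (u' t) (hu'_mem t)
      have hpt : ∀ x, dot2 (u' t x) (m t x - D t x • u t x)
          = dot2 (u' t x) (m t x) - D t x * dot2 (u' t x) (u t x) := by
        intro x
        simp only [dot2, Pi.sub_apply, Pi.smul_apply, smul_eq_mul]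
        ring
      rw [show (fun x => dot2 (u' t x) (m t x - D t x • u t x))
          = fun x => dot2 (u' t x) (m t x) - D t x * dot2 (u' t x) (u t x) from funext hpt] at h0
      rw [integral_sub i3 i4] at h0
      linarith
    -- (d) ∫ dot2 m u' = ∫ div m · G  (from the momentum equation with w = m)
    have eA : (∫ x, dot2 (m t x) (u' t x)) = ∫ x, div2 (m t) x * G x := by
      have h0 := hmom t (m t) (hm_mem t)
      have hperp : ∀ x, q t x * dot2 (m t x) (perp2 (m t x)) = 0 := by
        intro x
        simp only [dot2, perp2, Matrix.cons_val_zero, Matrix.cons_val_one, Matrix.head_cons]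
        ring
      rw [show (fun x => q t x * dot2 (m t x) (perp2 (m t x))) = fun _ => (0:ℝ) from
        funext hperp] at h0
      rw [integral_zero] at h0
      simp only [hGdef]
      linarith
    -- put it together
    have hptF' : ∀ x, F' t x = D t x * dot2 (u t x) (u' t x) + D' t x * G x := by
      intro x
      simp only [hF'def, hGdef]
      ring
    rw [show (fun x => F' t x) = fun x => D t x * dot2 (u t x) (u' t x) + D' t x * G x from
      funext hptF']
    rw [integral_add i4' i1]
    have sym1 : (∫ x, D t x * dot2 (u t x) (u' t x)) = ∫ x, D t x * dot2 (u' t x) (u t x) := by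
      congr 1; funext x; simp only [dot2]; ring
    have sym2 : (∫ x, dot2 (u' t x) (m t x)) = ∫ x, dot2 (m t x) (u' t x) := by
      congr 1; funext x; simp only [dot2]; ring
    linarith
  -- conclude: H is constant
  have hconst : ∀ a c : ℝ, H a = H c := by
    intro a c
    have hdiff : Differentiable ℝ H := fun t => by
      have := hHderiv t; rw [hzero t] at this; exact this.differentiableAt
    have hder : ∀ t, deriv H t = 0 := by
      intro t
      have := hHderiv t; rw [hzero t] at this
      exact this.deriv
    exact is_const_of_deriv_eq_zero hdiff hder a c
  intro s t
  exact hconst t s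
end

section
/- For the energy–enstrophy conserving shallow water scheme, the diagnostic potential vorticity satisfies a consistent discrete transport law: for every γ ∈ V₀ and every t, d/dt ∫_{ℝ²} γ q(t) D(t) dx = ∫_{ℝ²} ∇γ · (q(t) m(t)) dx. -/
open MeasureTheory

/-- If a path stays in a finite-dimensional submodule, its pointwise-through-functionals
derivative passes to any linear functional on the submodule. -/
lemma deriv_through_functionals
    {M : Type*} [AddCommGroup M] [Module ℝ M]
    (V : Submodule ℝ M) [FiniteDimensional ℝ V]
    {ι : Type*} (ε : ι → M →ₗ[ℝ] ℝ)
    (hsep : ∀ v ∈ V, (∀ i, ε i v = 0) → v = 0)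
    (u u' : ℝ → M) (hu : ∀ s, u s ∈ V) (hu' : ∀ s, u' s ∈ V)
    (hderiv : ∀ i t, HasDerivAt (fun s => ε i (u s)) (ε i (u' t)) t)
    (L : V →ₗ[ℝ] ℝ) (t : ℝ) :
    HasDerivAt (fun s => L ⟨u s, hu s⟩) (L ⟨u' t, hu' t⟩) t := by
  classical
  set ε' : ι → Module.Dual ℝ V := fun i => (ε i).comp V.subtype with hε'def
  have hW : Submodule.span ℝ (Set.range ε') = ⊤ := by
    have hco : (Submodule.span ℝ (Set.range ε')).dualCoannihilator = ⊥ := by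
      rw [Submodule.eq_bot_iff]
      intro v hv
      rw [Submodule.mem_dualCoannihilator] at hv
      have hz : (v : M) = 0 :=
        hsep v v.2 (fun i => hv (ε' i) (Submodule.subset_span ⟨i, rfl⟩))
      exact Subtype.ext hz
    have h := Subspace.dualCoannihilator_dualAnnihilator_eq
      (W := Submodule.span ℝ (Set.range ε'))
    rw [hco, Submodule.dualAnnihilator_bot] at h
    exact h.symm
  set b := Module.finBasis ℝ V with hb
  set U : ℝ → V := fun s => ⟨u s, hu s⟩ with hU
  set U' : ℝ → V := fun s => ⟨u' s, hu' s⟩ with hU'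
  -- coordinate derivatives
  have hcoord : ∀ j, HasDerivAt (fun s => b.coord j (U s)) (b.coord j (U' t)) t := by
    intro j
    have hmem : b.coord j ∈ Submodule.span ℝ (Set.range ε') := hW ▸ Submodule.mem_top
    obtain ⟨n, c, g, hsum⟩ := Submodule.mem_span_set'.1 hmem
    choose idx hidx using fun i : Fin n => (g i).2
    have hrep : ∀ v : V, b.coord j v = ∑ i : Fin n, c i * ε (idx i) (v : M) := by
      intro v
      rw [← hsum]
      simp only [LinearMap.coe_sum, Finset.sum_apply, LinearMap.smul_apply, smul_eq_mul]
      refine Finset.sum_congr rfl fun i _ => ?_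
      rw [← hidx i]
      rfl
    have h1 : HasDerivAt (fun s => ∑ i : Fin n, c i * ε (idx i) (u s))
        (∑ i : Fin n, c i * ε (idx i) (u' t)) t :=
      HasDerivAt.fun_sum fun i _ => (hderiv (idx i) t).const_mul (c i)
    have h2 : (fun s => b.coord j (U s)) = fun s => ∑ i : Fin n, c i * ε (idx i) (u s) := by
      funext s; exact hrep (U s)
    rw [h2, hrep (U' t)]
    exact h1
  have hexp : ∀ v : V, L v = ∑ j, b.coord j v * L (b j) := by
    intro v
    conv_lhs => rw [← b.sum_repr v]
    rw [map_sum]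
    refine Finset.sum_congr rfl fun j _ => ?_
    rw [_root_.map_smul, smul_eq_mul, Module.Basis.coord_apply]
  have h3 : (fun s => L (U s)) = fun s => ∑ j, b.coord j (U s) * L (b j) := by
    funext s; exact hexp (U s)
  have h4 : HasDerivAt (fun s => ∑ j, b.coord j (U s) * L (b j))
      (∑ j, b.coord j (U' t) * L (b j)) t :=
    HasDerivAt.fun_sum fun j _ => (hcoord j).mul_const (L (b j))
  have := h3 ▸ h4
  rwa [← hexp (U' t)] at this

/-- **Consistent potential vorticity transport**: for the energy–enstrophy
conserving shallow water scheme, the diagnostic potential vorticity satisfies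
`d/dt ∫ γ q D dx = ∫ ∇γ·(q m) dx` for every `γ ∈ V₀`. -/
theorem swe_scheme_consistent_pv_transport
    (V₀ : Submodule ℝ ((Fin 2 → ℝ) → ℝ))
    (V₁ : Submodule ℝ ((Fin 2 → ℝ) → Fin 2 → ℝ))
    (V₂ : Submodule ℝ ((Fin 2 → ℝ) → ℝ))
    [FiniteDimensional ℝ V₀] [FiniteDimensional ℝ V₁] [FiniteDimensional ℝ V₂]
    (hV₀ : ∀ γ ∈ V₀, ContDiff ℝ (⊤ : ℕ∞) γ ∧ HasCompactSupport γ)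
    (hV₁ : ∀ w ∈ V₁, ContDiff ℝ (⊤ : ℕ∞) w ∧ HasCompactSupport w)
    (hV₂ : ∀ φ ∈ V₂, ContDiff ℝ (⊤ : ℕ∞) φ ∧ HasCompactSupport φ)
    (hcurl : ∀ γ ∈ V₀, gradPerp2 γ ∈ V₁)
    (hdiv : ∀ w ∈ V₁, div2 w ∈ V₂)
    (g : ℝ) (b f : (Fin 2 → ℝ) → ℝ)
    (hb : ContDiff ℝ (⊤ : ℕ∞) b) (hf : ContDiff ℝ (⊤ : ℕ∞) f)
    (u u' m m' : ℝ → (Fin 2 → ℝ) → Fin 2 → ℝ)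
    (D D' : ℝ → (Fin 2 → ℝ) → ℝ) (q q' : ℝ → (Fin 2 → ℝ) → ℝ)
    (hu_mem : ∀ t, u t ∈ V₁) (hu'_mem : ∀ t, u' t ∈ V₁)
    (hm_mem : ∀ t, m t ∈ V₁) (hm'_mem : ∀ t, m' t ∈ V₁)
    (hD_mem : ∀ t, D t ∈ V₂) (hD'_mem : ∀ t, D' t ∈ V₂)
    (hq_mem : ∀ t, q t ∈ V₀) (hq'_mem : ∀ t, q' t ∈ V₀)
    (hu_deriv : ∀ t x, HasDerivAt (fun s => u s x) (u' t x) t)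
    (hm_deriv : ∀ t x, HasDerivAt (fun s => m s x) (m' t x) t)
    (hD_deriv : ∀ t x, HasDerivAt (fun s => D s x) (D' t x) t)
    (hq_deriv : ∀ t x, HasDerivAt (fun s => q s x) (q' t x) t)
    (hu'_cont : ∀ x, Continuous fun t => u' t x)
    (hm'_cont : ∀ x, Continuous fun t => m' t x)
    (hD'_cont : ∀ x, Continuous fun t => D' t x)
    (hq'_cont : ∀ x, Continuous fun t => q' t x)
    (hmom : ∀ t, ∀ w ∈ V₁,
      (∫ x, dot2 (w x) (u' t x))
        + (∫ x, q t x * dot2 (w x) (perp2 (m t x)))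
        - (∫ x, div2 w x
            * ((1/2 : ℝ) * dot2 (u t x) (u t x) + g * (D t x + b x))) = 0)
    (hcont : ∀ t, ∀ φ ∈ V₂, ∫ x, φ x * (D' t x + div2 (m t) x) = 0)
    (hpv : ∀ t, ∀ γ ∈ V₀,
      (∫ x, γ x * (q t x * D t x)) + (∫ x, dot2 (gradPerp2 γ x) (u t x))
        - (∫ x, γ x * f x) = 0)
    (hflux : ∀ t, ∀ v ∈ V₁, ∫ x, dot2 (v x) (m t x - D t x • u t x) = 0) :
    ∀ γ ∈ V₀, ∀ t : ℝ,
      HasDerivAt (fun s => ∫ x, γ x * (q s x * D s x))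
        (∫ x, q t x * dot2 (grad2 γ x) (m t x)) t := by
  intro γ hγ t
  obtain ⟨hγs, hγc⟩ := hV₀ γ hγ
  have hgp : gradPerp2 γ ∈ V₁ := hcurl γ hγ
  -- continuity of partial derivatives of γ
  have hpdc : ∀ i : Fin 2, Continuous (pd2 i γ) := by
    intro i
    exact (hγs.continuous_fderiv (by simp)).clm_apply continuous_const
  -- integrability
  have hInt : ∀ w ∈ V₁, Integrable (fun x => dot2 (gradPerp2 γ x) (w x)) := by
    intro w hw
    obtain ⟨hws, hwc⟩ := hV₁ w hw
    have hfun : (fun x => dot2 (gradPerp2 γ x) (w x))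
        = fun x => -(pd2 1 γ x) * w x 0 + pd2 0 γ x * w x 1 := by
      funext x; simp [dot2, gradPerp2]
    have hc : Continuous fun x => dot2 (gradPerp2 γ x) (w x) := by
      rw [hfun]
      exact (((hpdc 1).neg.mul ((continuous_apply 0).comp hws.continuous)).add
        ((hpdc 0).mul ((continuous_apply 1).comp hws.continuous)))
    have hcs : HasCompactSupport fun x => dot2 (gradPerp2 γ x) (w x) := by
      refine hwc.mono ?_
      intro x hx
      simp only [Function.mem_support, ne_eq] at hx ⊢
      intro hwx
      apply hx
      rw [hwx]
      simp [dot2]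
    exact hc.integrable_of_hasCompactSupport hcs
  -- the linear functional
  set L : V₁ →ₗ[ℝ] ℝ :=
    { toFun := fun w => ∫ x, dot2 (gradPerp2 γ x) (w.1 x)
      map_add' := by
        rintro ⟨w, hw⟩ ⟨v, hv⟩
        show (∫ x, dot2 (gradPerp2 γ x) ((w + v) x))
          = (∫ x, dot2 (gradPerp2 γ x) (w x)) + ∫ x, dot2 (gradPerp2 γ x) (v x)
        rw [← integral_add (hInt w hw) (hInt v hv)]
        congr 1
        funext x
        simp only [Pi.add_apply, dot2]
        ring
      map_smul' := by
        rintro r ⟨w, hw⟩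
        show (∫ x, dot2 (gradPerp2 γ x) ((r • w) x)) = r • ∫ x, dot2 (gradPerp2 γ x) (w x)
        rw [← integral_smul]
        congr 1
        funext x
        simp only [Pi.smul_apply, smul_eq_mul, dot2]
        ring } with hLdef
  -- evaluation functionals
  set ε : ((Fin 2 → ℝ) × Fin 2) → ((Fin 2 → ℝ) → Fin 2 → ℝ) →ₗ[ℝ] ℝ :=
    fun p => { toFun := fun w => w p.1 p.2
               map_add' := fun _ _ => rfl
               map_smul' := fun _ _ => rfl } with hεdef
  have hsep : ∀ v ∈ V₁, (∀ p, ε p v = 0) → v = 0 := by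
    intro v _ h
    funext x k
    exact h (x, k)
  have hF : HasDerivAt (fun s => ∫ x, dot2 (gradPerp2 γ x) (u s x))
      (∫ x, dot2 (gradPerp2 γ x) (u' t x)) t := by
    have := deriv_through_functionals V₁ ε hsep u u' hu_mem hu'_mem
      (fun p t' => hasDerivAt_pi.1 (hu_deriv t' p.1) p.2) L t
    exact this
  -- rewrite the target function using the PV equation
  have hG : ∀ s, (∫ x, γ x * (q s x * D s x))
      = (∫ x, γ x * f x) - ∫ x, dot2 (gradPerp2 γ x) (u s x) := by
    intro s
    have := hpv s γ hγ
    linarith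
  have hKey : HasDerivAt (fun s => ∫ x, γ x * (q s x * D s x))
      (0 - ∫ x, dot2 (gradPerp2 γ x) (u' t x)) t := by
    have h1 := (hasDerivAt_const t (∫ x, γ x * f x)).sub hF
    refine h1.congr_of_eventuallyEq ?_
    exact Filter.Eventually.of_forall fun s => hG s
  -- second derivative symmetry: div2 (gradPerp2 γ) = 0
  have hγd : Differentiable ℝ γ := hγs.differentiable (by simp)
  have hφcd : ContDiff ℝ ((⊤ : ℕ∞) : WithTop ℕ∞) (fderiv ℝ γ) :=
    hγs.fderiv_right (by simp)
  have hφd : Differentiable ℝ (fderiv ℝ γ) := hφcd.differentiable (by simp)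
  have hsnd : ∀ x v w, fderiv ℝ (fun y => fderiv ℝ γ y v) x w
      = fderiv ℝ (fderiv ℝ γ) x w v := by
    intro x v w
    have h1 : HasFDerivAt (fun y => fderiv ℝ γ y v)
        ((ContinuousLinearMap.apply ℝ ℝ v).comp (fderiv ℝ (fderiv ℝ γ) x)) x :=
      (ContinuousLinearMap.apply ℝ ℝ v).hasFDerivAt.comp x (hφd x).hasFDerivAt
    rw [h1.fderiv]
    rfl
  have hschwarz : ∀ x v w, fderiv ℝ (fderiv ℝ γ) x v w = fderiv ℝ (fderiv ℝ γ) x w v :=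
    fun x v w => second_derivative_symmetric (fun y => (hγd y).hasFDerivAt)
      (hφd x).hasFDerivAt v w
  have hdiv0 : ∀ x, div2 (gradPerp2 γ) x = 0 := by
    intro x
    have e0 : (fun y => gradPerp2 γ y 0) = fun y => -(pd2 1 γ y) := by
      funext y; simp [gradPerp2]
    have e1 : (fun y => gradPerp2 γ y 1) = fun y => pd2 0 γ y := by
      funext y; simp [gradPerp2]
    have h0 : pd2 0 (fun y => gradPerp2 γ y 0) x = -(pd2 0 (fun y => pd2 1 γ y) x) := by
      rw [e0]
      show fderiv ℝ (fun y => -(pd2 1 γ y)) x (Pi.single 0 1) = _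
      rw [fderiv_fun_neg]
      simp only [ContinuousLinearMap.neg_apply, neg_inj]
      rfl
    have h1 : pd2 1 (fun y => gradPerp2 γ y 1) x = pd2 1 (fun y => pd2 0 γ y) x := by
      rw [e1]
    have hsym : pd2 0 (fun y => pd2 1 γ y) x = pd2 1 (fun y => pd2 0 γ y) x := by
      show fderiv ℝ (fun y => fderiv ℝ γ y (Pi.single 1 1)) x (Pi.single 0 1)
        = fderiv ℝ (fun y => fderiv ℝ γ y (Pi.single 0 1)) x (Pi.single 1 1)
      rw [hsnd x (Pi.single 1 1) (Pi.single 0 1), hsnd x (Pi.single 0 1) (Pi.single 1 1)]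
      exact hschwarz x (Pi.single 0 1) (Pi.single 1 1)
    show pd2 0 (fun y => gradPerp2 γ y 0) x + pd2 1 (fun y => gradPerp2 γ y 1) x = 0
    rw [h0, h1, hsym]
    ring
  -- pointwise identity for the q-term
  have hBeq : (∫ x, q t x * dot2 (gradPerp2 γ x) (perp2 (m t x)))
      = ∫ x, q t x * dot2 (grad2 γ x) (m t x) := by
    congr 1
    funext x
    simp only [dot2, gradPerp2, grad2, perp2, Matrix.cons_val_zero, Matrix.cons_val_one,
      Matrix.head_cons]
    ring
  have hCeq : (∫ x, div2 (gradPerp2 γ) x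
      * ((1/2 : ℝ) * dot2 (u t x) (u t x) + g * (D t x + b x))) = 0 := by
    simp only [hdiv0, zero_mul, integral_zero]
  have hmomt := hmom t (gradPerp2 γ) hgp
  rw [hBeq, hCeq] at hmomt
  have hfinal : (∫ x, q t x * dot2 (grad2 γ x) (m t x))
      = 0 - ∫ x, dot2 (gradPerp2 γ x) (u' t x) := by linarith
  rw [hfinal]
  exact hKey
end

section
/- Let K̂ ⊆ ℝ² be open, let g : K̂ → ℝ² be an injective continuously differentiable map with det Dg(x) > 0 for all x ∈ K̂, and set K := g(K̂). Let φ̂ : K̂ → ℝ and û, ŵ : K̂ → ℝ² be measurable with φ̂ (û·ŵ^⊥) integrable on K̂. Define φ, u, w on K by φ(g(x)) = φ̂(x), u(g(x)) = Dg(x)û(x)/det Dg(x) and w(g(x)) = Dg(x)ŵ(x)/det Dg(x) (the contravariant Piola transform). Then φ (u·w^⊥) is integrable on K and ∫_K φ (u·w^⊥) dy = ∫_{K̂} φ̂ (û·ŵ^⊥) dx: the rotational pairing is invariant under Piola pullback, with all Jacobian factors cancelling. -/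
open MeasureTheory

lemma dot2_perp_linear (L : (Fin 2 → ℝ) →ₗ[ℝ] (Fin 2 → ℝ)) (a b : Fin 2 → ℝ) :
    dot2 (L a) (perp2 (L b)) = LinearMap.det L * dot2 a (perp2 b) := by
  have hL : ∀ v, L v = (LinearMap.toMatrix' L).mulVec v := by
    intro v
    conv_lhs => rw [← Matrix.toLin'_toMatrix' L]
    rw [Matrix.toLin'_apply]
  rw [← LinearMap.det_toMatrix' L, hL a, hL b]
  simp only [dot2, perp2, Matrix.det_fin_two, Matrix.mulVec, dotProduct,
    Fin.sum_univ_two, Matrix.cons_val_zero, Matrix.cons_val_one, Matrix.head_cons]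
  ring

lemma key_pointwise (L : (Fin 2 → ℝ) →L[ℝ] (Fin 2 → ℝ)) (hd : 0 < L.det)
    (c : ℝ) (a b : Fin 2 → ℝ) :
    |L.det| • (c * dot2 (L.det⁻¹ • (L a)) (perp2 (L.det⁻¹ • (L b))))
      = c * dot2 a (perp2 b) := by
  have hdet : dot2 (L a) (perp2 (L b)) = L.det * dot2 a (perp2 b) :=
    dot2_perp_linear (L : (Fin 2 → ℝ) →ₗ[ℝ] (Fin 2 → ℝ)) a b
  have hne : L.det ≠ 0 := ne_of_gt hd
  have habs : |L.det| = L.det := abs_of_pos hd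
  have hscale : dot2 (L.det⁻¹ • (L a)) (perp2 (L.det⁻¹ • (L b)))
      = L.det⁻¹ * L.det⁻¹ * dot2 (L a) (perp2 (L b)) := by
    simp [dot2, perp2, Pi.smul_apply, smul_eq_mul]
    ring
  rw [smul_eq_mul, habs, hscale, hdet]
  field_simp

/-- **Invariance of the rotational pairing under the contravariant Piola
transform**: if `φ, u, w` on `K = g(K̂)` are obtained from `φ̂, û, ŵ` by
composition and the contravariant Piola transform respectively, then
`∫_K φ(u·w^⊥) dy = ∫_{K̂} φ̂(û·ŵ^⊥) dx`, all Jacobian factors cancelling. -/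
theorem piola_rotational_pairing_invariance
    (Khat : Set (Fin 2 → ℝ)) (hK : IsOpen Khat)
    (g : (Fin 2 → ℝ) → Fin 2 → ℝ)
    (g' : (Fin 2 → ℝ) → (Fin 2 → ℝ) →L[ℝ] (Fin 2 → ℝ))
    (hg : ∀ x ∈ Khat, HasFDerivAt g (g' x) x)
    (hg' : ContinuousOn g' Khat)
    (hinj : Set.InjOn g Khat)
    (hdet : ∀ x ∈ Khat, 0 < (g' x).det)
    (φhat : (Fin 2 → ℝ) → ℝ) (uhat what : (Fin 2 → ℝ) → Fin 2 → ℝ)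
    (hφm : Measurable φhat) (hum : Measurable uhat) (hwm : Measurable what)
    (hint : IntegrableOn (fun x => φhat x * dot2 (uhat x) (perp2 (what x))) Khat)
    (φ : (Fin 2 → ℝ) → ℝ) (u w : (Fin 2 → ℝ) → Fin 2 → ℝ)
    (hφ : ∀ x ∈ Khat, φ (g x) = φhat x)
    (hu : ∀ x ∈ Khat, u (g x) = ((g' x).det)⁻¹ • (g' x (uhat x)))
    (hw : ∀ x ∈ Khat, w (g x) = ((g' x).det)⁻¹ • (g' x (what x))) :
    IntegrableOn (fun y => φ y * dot2 (u y) (perp2 (w y))) (g '' Khat) ∧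
    ∫ y in g '' Khat, φ y * dot2 (u y) (perp2 (w y))
      = ∫ x in Khat, φhat x * dot2 (uhat x) (perp2 (what x)) := by
  have hs : MeasurableSet Khat := hK.measurableSet
  have hf' : ∀ x ∈ Khat, HasFDerivWithinAt g (g' x) Khat x :=
    fun x hx => (hg x hx).hasFDerivWithinAt
  set F : (Fin 2 → ℝ) → ℝ := fun y => φ y * dot2 (u y) (perp2 (w y)) with hF
  have hpt : ∀ x ∈ Khat,
      |(g' x).det| • F (g x) = φhat x * dot2 (uhat x) (perp2 (what x)) := by
    intro x hx
    rw [hF]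
    simp only [hφ x hx, hu x hx, hw x hx]
    exact key_pointwise (g' x) (hdet x hx) (φhat x) (uhat x) (what x)
  have heq : Set.EqOn (fun x => |(g' x).det| • F (g x))
      (fun x => φhat x * dot2 (uhat x) (perp2 (what x))) Khat := fun x hx => hpt x hx
  have hi : IntegrableOn F (g '' Khat) := by
    rw [integrableOn_image_iff_integrableOn_abs_det_fderiv_smul volume hs hf' hinj F]
    exact (IntegrableOn.congr_fun hint heq.symm hs)
  refine ⟨hi, ?_⟩
  rw [integral_image_eq_integral_abs_det_fderiv_smul volume hs hf' hinj F]
  exact setIntegral_congr_fun hs heq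
end
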